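/- arXiv:2003.07161 — 10 statements merged into one kernel-verified Lean document; each statement's English description precedes it below -/
import Mathlib

section
/- Let X be a separable Fréchet space (a complete metrizable locally convex topological vector space) and let T be a continuous linear operator on X. If T is chaotic, then T is AP_b-hypercyclic. -/
/-- A set `A ⊆ ℕ` belongs to the family `AP_b` if it contains arbitrarily long
arithmetic progressions with some fixed common difference `k ≥ 1`. -/
def APb (A : Set ℕ) : Prop :=
  ∃ k : ℕ, 1 ≤ k ∧ ∀ m : ℕ, ∃ a : ℕ, ∀ j : ℕ, j ≤ m → a + j * k ∈ A

/-!
If `p ∈ U` has period `k`, the conditions `f^[j * k] y ∈ U` for `j ≤ m` cut out an open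
neighbourhood of `p`; a dense orbit enters it at some time `a`, and then
`a, a + k, …, a + m * k` all return the orbit to `U`.
-/

open Function

section DenseOrbit

variable {X : Type*} [TopologicalSpace X] {f : X → X} {x p : X} {U : Set X} {k : ℕ}

theorem exists_forall_le_iterate_add_mul_mem (hf : Continuous f)
    (hx : Dense (Set.range fun n ↦ f^[n] x)) (hU : IsOpen U) (hp : IsPeriodicPt f k p)
    (hpU : p ∈ U) (m : ℕ) : ∃ a, ∀ j ≤ m, f^[a + j * k] x ∈ U := by
  set W := ⋂ j ∈ Finset.range (m + 1), f^[j * k] ⁻¹' U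
  have hW : IsOpen W := isOpen_biInter_finset fun j _ ↦ hU.preimage (hf.iterate _)
  have hpW : p ∈ W := Set.mem_iInter₂.2 fun j _ ↦ by
    rwa [Set.mem_preimage, (hp.const_mul j).eq]
  obtain ⟨_, ⟨a, rfl⟩, haW⟩ := hx.exists_mem_open hW ⟨p, hpW⟩
  refine ⟨a, fun j hj ↦ ?_⟩
  rw [add_comm, iterate_add_apply]
  exact Set.mem_iInter₂.1 haW j (Finset.mem_range.2 (Nat.lt_succ_of_le hj))

theorem APb_setOf_iterate_mem (hf : Continuous f) (hx : Dense (Set.range fun n ↦ f^[n] x))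
    (hU : IsOpen U) (hk : 1 ≤ k) (hp : IsPeriodicPt f k p) (hpU : p ∈ U) :
    APb {n | f^[n] x ∈ U} :=
  ⟨k, hk, exists_forall_le_iterate_add_mul_mem hf hx hU hp hpU⟩

end DenseOrbit

theorem chaotic_implies_APb_hypercyclic_general
    {X : Type*} [AddCommGroup X] [Module ℝ X] [UniformSpace X]
    (T : X →L[ℝ] X)
    (hHC : ∃ x : X, Dense (Set.range fun n : ℕ => (T ^ n) x))
    (hPer : Dense {x : X | ∃ n : ℕ, 1 ≤ n ∧ (T ^ n) x = x}) :
    ∃ x : X, ∀ U : Set X, IsOpen U → U.Nonempty → APb {n : ℕ | (T ^ n) x ∈ U} := by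
  simp only [FunLike.coe_pow_eq_iterate] at hHC hPer ⊢
  obtain ⟨x, hx⟩ := hHC
  refine ⟨x, fun U hU hUne ↦ ?_⟩
  obtain ⟨p, ⟨k, hk, hp⟩, hpU⟩ := hPer.exists_mem_open hU hUne
  exact APb_setOf_iterate_mem T.continuous hx hU hk hp hpU

/-- Let `X` be a separable Fréchet space (complete metrizable locally
convex topological vector space) and `T` a continuous linear operator on `X`.
If `T` is chaotic (hypercyclic with dense periodic points), then `T` is
`AP_b`-hypercyclic. -/
theorem chaotic_implies_APb_hypercyclic
    {X : Type*} [AddCommGroup X] [Module ℝ X] [UniformSpace X] [IsUniformAddGroup X]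
    [ContinuousSMul ℝ X] [LocallyConvexSpace ℝ X] [CompleteSpace X]
    [Filter.IsCountablyGenerated (uniformity X)] [T2Space X]
    [TopologicalSpace.SeparableSpace X]
    (T : X →L[ℝ] X)
    (hHC : ∃ x : X, Dense (Set.range fun n : ℕ => (T ^ n) x))
    (hPer : Dense {x : X | ∃ n : ℕ, 1 ≤ n ∧ (T ^ n) x = x}) :
    ∃ x : X, ∀ U : Set X, IsOpen U → U.Nonempty → APb {n : ℕ | (T ^ n) x ∈ U} :=
  chaotic_implies_APb_hypercyclic_general T hHC hPer
end

section
/- Let T be a continuous linear operator on a separable Fréchet space X. The following assertions are equivalent: (1) T is hypercyclic and every hypercyclic vector of T is an AP_b-hypercyclic vector; (2) T has an AP_b-hypercyclic vector; (3) T is hypercyclic and for every nonempty open set U ⊆ X there is k ≥ 1 such that for every m ∈ ℕ the intersection ⋂_{j=1}^{m} T^{-jk}(U) is nonempty; (4) for all nonempty open sets U, V ⊆ X there is k ≥ 1 such that for every m ∈ ℕ there exist k_m ∈ ℕ and x ∈ U with T^{k_m + jk}(x) ∈ V for every 0 ≤ j ≤ m; (5) the set of AP_b-hypercyclic vectors of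 T is residual (comeagre) in X. -/
theorem APb.mono {A B : Set ℕ} (h : A ⊆ B) (hA : APb A) : APb B := by
  obtain ⟨k, hk, hprog⟩ := hA
  exact ⟨k, hk, fun m => (hprog m).imp fun a ha j hj => h (ha j hj)⟩

open Set Filter TopologicalSpace Function

section Iterates

variable {X : Type*} {f : X → X} {x : X} {U : Set X}

def APbRecurrent (f : X → X) (U : Set X) : Prop :=
  ∃ k, 1 ≤ k ∧ ∀ m, ∃ z, ∀ j ≤ m, f^[j * k] z ∈ U

theorem apb_setOf_iterate_mem_iff :
    APb {n | f^[n] x ∈ U} ↔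
      ∃ k, 1 ≤ k ∧ ∀ m, ∃ a, f^[a] x ∈ {z | ∀ j ≤ m, f^[j * k] z ∈ U} := by
  simp only [APb, mem_ofPred_eq, ← iterate_add_apply, Nat.add_comm]

theorem apbRecurrent_of_apb (h : APb {n | f^[n] x ∈ U}) : APbRecurrent f U := by
  obtain ⟨k, hk, hprog⟩ := apb_setOf_iterate_mem_iff.1 h
  exact ⟨k, hk, fun m => let ⟨a, ha⟩ := hprog m; ⟨f^[a] x, ha⟩⟩

theorem apbRecurrent_iff_biInter_preimage_nonempty :
    (∃ k, 1 ≤ k ∧ ∀ m, (⋂ j ∈ Finset.Icc 1 m, f^[j * k] ⁻¹' U).Nonempty) ↔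
      APbRecurrent f U := by
  simp only [APbRecurrent, Set.Nonempty, mem_iInter₂, Finset.mem_Icc, mem_preimage]
  refine exists_congr fun k => and_congr_right fun _ => ⟨fun h m => ?_, fun h m => ?_⟩
  · obtain ⟨z, hz⟩ := h (m + 1)
    refine ⟨f^[k] z, fun j hj => ?_⟩
    rw [← iterate_add_apply, ← Nat.succ_mul]
    exact hz (j + 1) ⟨j.succ_pos, by omega⟩
  · exact (h m).imp fun z hz j hj => hz j hj.2

end Iterates

section Topological

variable {X : Type*} [TopologicalSpace X] {f : X → X} {x : X} {U : Set X}

def IsAPbHypercyclicVector (f : X → X) (x : X) : Prop :=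
  ∀ U : Set X, IsOpen U → U.Nonempty → APb {n | f^[n] x ∈ U}

def IsAPbTransitive (f : X → X) : Prop :=
  ∀ U V : Set X, IsOpen U → U.Nonempty → IsOpen V → V.Nonempty →
    ∃ k, 1 ≤ k ∧ ∀ m, ∃ km, ∃ x ∈ U, ∀ j, j ≤ m → f^[km + j * k] x ∈ V

theorem isOpen_setOf_forall_iterate_mem (hf : Continuous f) (hU : IsOpen U) (k m : ℕ) :
    IsOpen {z | ∀ j ≤ m, f^[j * k] z ∈ U} := by
  simp only [ofPred_forall]
  exact (finite_le_nat m).isOpen_biInter fun j _ => hU.preimage (hf.iterate _)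

theorem apb_of_dense_range_iterate (hf : Continuous f) (hx : Dense (range fun n => f^[n] x))
    (hU : IsOpen U) (hrec : APbRecurrent f U) : APb {n | f^[n] x ∈ U} := by
  obtain ⟨k, hk, hz⟩ := hrec
  refine apb_setOf_iterate_mem_iff.2 ⟨k, hk, fun m => ?_⟩
  obtain ⟨_, ⟨a, rfl⟩, ha⟩ :=
    hx.exists_mem_open (isOpen_setOf_forall_iterate_mem hf hU k m) (hz m)
  exact ⟨a, ha⟩

namespace IsAPbHypercyclicVector

theorem dense_range_iterate (hx : IsAPbHypercyclicVector f x) :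
    Dense (range fun n => f^[n] x) := by
  refine dense_iff_inter_open.2 fun U hU hne => ?_
  obtain ⟨k, -, hprog⟩ := hx U hU hne
  obtain ⟨a, ha⟩ := hprog 0
  exact ⟨f^[a] x, by simpa using ha 0 le_rfl, a, rfl⟩

-- `m + n`: its last `m + 1` terms start after time `n`.
theorem isAPbTransitive (hx : IsAPbHypercyclicVector f x) : IsAPbTransitive f := by
  intro U V hU hUne hV hVne
  obtain ⟨_, ⟨n, rfl⟩, hnU⟩ := hx.dense_range_iterate.exists_mem_open hU hUne
  obtain ⟨k, hk, hprog⟩ := hx V hV hVne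
  refine ⟨k, hk, fun m => ?_⟩
  obtain ⟨a, ha⟩ := hprog (m + n)
  refine ⟨a + n * k - n, f^[n] x, hnU, fun j hj => ?_⟩
  have hnk : n ≤ n * k := Nat.le_mul_of_pos_right n hk
  have htime : a + n * k - n + j * k + n = a + (n + j) * k := by rw [add_mul]; omega
  rw [← iterate_add_apply, htime]
  exact ha (n + j) (by omega)

end IsAPbHypercyclicVector

namespace IsAPbTransitive

theorem apbRecurrent (hf : IsAPbTransitive f) (hU : IsOpen U) (hne : U.Nonempty) :
    APbRecurrent f U := by
  obtain ⟨k, hk, hprog⟩ := hf univ U isOpen_univ (hne.mono (subset_univ U)) hU hne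
  refine ⟨k, hk, fun m => ?_⟩
  obtain ⟨km, y, -, hy⟩ := hprog m
  refine ⟨f^[km] y, fun j hj => ?_⟩
  rw [← iterate_add_apply, Nat.add_comm]
  exact hy j hj

theorem exists_iterate_mem (hf : IsAPbTransitive f) {V W : Set X} (hV : IsOpen V)
    (hVne : V.Nonempty) (hW : IsOpen W) (hWne : W.Nonempty) :
    ∃ n, (V ∩ f^[n] ⁻¹' W).Nonempty := by
  obtain ⟨k, -, hprog⟩ := hf V W hV hVne hW hWne
  obtain ⟨n, y, hyV, hy⟩ := hprog 0
  exact ⟨n, y, hyV, by simpa using hy 0 le_rfl⟩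

end IsAPbTransitive

theorem dense_iUnion_preimage_iterate {W : Set X}
    (htrans : ∀ V, IsOpen V → V.Nonempty → ∃ n, (V ∩ f^[n] ⁻¹' W).Nonempty) :
    Dense (⋃ n, f^[n] ⁻¹' W) := by
  refine dense_iff_inter_open.2 fun V hV hne => ?_
  obtain ⟨n, y, hyV, hyW⟩ := htrans V hV hne
  exact ⟨y, hyV, mem_iUnion.2 ⟨n, hyW⟩⟩

theorem setOf_forall_isOpen_mem_residual [SecondCountableTopology X] {P : Set X → X → Prop}
    (hmono : ∀ {U V : Set X}, U ⊆ V → ∀ x, P U x → P V x)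
    (h : ∀ U, IsOpen U → U.Nonempty → {x | P U x} ∈ residual X) :
    {x | ∀ U, IsOpen U → U.Nonempty → P U x} ∈ residual X := by
  set S := {b ∈ countableBasis X | b.Nonempty}
  have hS : S.Countable := (countable_countableBasis X).mono fun _ hb => hb.1
  refine mem_of_superset ((countable_bInter_mem hS).2 fun b hb =>
    h b (isOpen_of_mem_countableBasis hb.1) hb.2) fun x hx U hU hne => ?_
  obtain ⟨y, hy⟩ := hne
  obtain ⟨b, hb, hyb, hbU⟩ := (isBasis_countableBasis X).exists_subset_of_mem_open hy hU
  exact hmono hbU x (mem_iInter₂.1 hx b ⟨hb, y, hyb⟩)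

theorem setOf_apb_mem_residual (hf : Continuous f) {U : Set X} (hU : IsOpen U)
    (hrec : APbRecurrent f U)
    (htrans : ∀ V W : Set X, IsOpen V → V.Nonempty → IsOpen W → W.Nonempty →
      ∃ n, (V ∩ f^[n] ⁻¹' W).Nonempty) :
    {x | APb {n | f^[n] x ∈ U}} ∈ residual X := by
  obtain ⟨k, hk, hz⟩ := hrec
  set C : ℕ → Set X := fun m => {z | ∀ j ≤ m, f^[j * k] z ∈ U}
  have hC : ∀ m, IsOpen (C m) := isOpen_setOf_forall_iterate_mem hf hU k
  have hdense : ∀ m, ⋃ a, f^[a] ⁻¹' C m ∈ residual X := fun m =>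
    residual_of_dense_open (isOpen_iUnion fun a => (hC m).preimage (hf.iterate a))
      (dense_iUnion_preimage_iterate fun V hV hne => htrans V (C m) hV hne (hC m) (hz m))
  refine mem_of_superset (countable_iInter_mem.2 hdense) fun x hx => ?_
  exact apb_setOf_iterate_mem_iff.2 ⟨k, hk, fun m => mem_iUnion.1 (mem_iInter.1 hx m)⟩

theorem setOf_isAPbHypercyclicVector_mem_residual [SecondCountableTopology X]
    (hf : Continuous f) (htrans : IsAPbTransitive f) :
    {x | IsAPbHypercyclicVector f x} ∈ residual X :=
  setOf_forall_isOpen_mem_residual (fun hUV _ => APb.mono fun _ hn => hUV hn)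
    fun _ hU hne => setOf_apb_mem_residual hf hU (htrans.apbRecurrent hU hne)
      fun _ _ => htrans.exists_iterate_mem

end Topological

theorem APb_hypercyclic_tfae_general
    {X : Type*} [AddCommGroup X] [Module ℝ X] [UniformSpace X] [CompleteSpace X]
    [Filter.IsCountablyGenerated (uniformity X)] [TopologicalSpace.SeparableSpace X]
    (T : X →L[ℝ] X) :
    List.TFAE [
      -- (1) T is hypercyclic and every hypercyclic vector is AP_b-hypercyclic
      (∃ x : X, Dense (Set.range fun n : ℕ => (T ^ n) x)) ∧
        (∀ x : X, Dense (Set.range fun n : ℕ => (T ^ n) x) →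
          ∀ U : Set X, IsOpen U → U.Nonempty → APb {n : ℕ | (T ^ n) x ∈ U}),
      -- (2) there is an AP_b-hypercyclic vector
      ∃ x : X, ∀ U : Set X, IsOpen U → U.Nonempty → APb {n : ℕ | (T ^ n) x ∈ U},
      -- (3)
      (∃ x : X, Dense (Set.range fun n : ℕ => (T ^ n) x)) ∧
        (∀ U : Set X, IsOpen U → U.Nonempty → ∃ k : ℕ, 1 ≤ k ∧ ∀ m : ℕ,
          (⋂ j ∈ Finset.Icc 1 m, (fun y : X => (T ^ (j * k)) y) ⁻¹' U).Nonempty),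
      -- (4)
      (∀ U V : Set X, IsOpen U → U.Nonempty → IsOpen V → V.Nonempty →
        ∃ k : ℕ, 1 ≤ k ∧ ∀ m : ℕ, ∃ km : ℕ, ∃ x ∈ U,
          ∀ j : ℕ, j ≤ m → (T ^ (km + j * k)) x ∈ V),
      -- (5) the AP_b-hypercyclic vectors are residual
      {x : X | ∀ U : Set X, IsOpen U → U.Nonempty → APb {n : ℕ | (T ^ n) x ∈ U}}
        ∈ residual X
    ] := by
  simp only [FunLike.coe_pow_eq_iterate]
  tfae_have 1 → 2 := fun ⟨⟨x, hx⟩, hall⟩ => ⟨x, hall x hx⟩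
  tfae_have 2 → 3 := fun ⟨x, hx⟩ => ⟨⟨x, IsAPbHypercyclicVector.dense_range_iterate hx⟩,
    fun U hU hne =>
      apbRecurrent_iff_biInter_preimage_nonempty.2 (apbRecurrent_of_apb (hx U hU hne))⟩
  tfae_have 3 → 1 := fun ⟨hdense, hrec⟩ => ⟨hdense, fun _ hx U hU hne =>
    apb_of_dense_range_iterate T.continuous hx hU
      (apbRecurrent_iff_biInter_preimage_nonempty.1 (hrec U hU hne))⟩
  tfae_have 2 → 4 := fun ⟨_, hx⟩ => IsAPbHypercyclicVector.isAPbTransitive hx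
  tfae_have 4 → 5 := setOf_isAPbHypercyclicVector_mem_residual T.continuous
  tfae_have 5 → 2 := fun h => (dense_of_mem_residual h).nonempty
  tfae_finish

/-- For a continuous linear operator `T` on a separable Fréchet
space `X`, the following are equivalent: (1) `T` is hypercyclic and every
hypercyclic vector is an `AP_b`-hypercyclic vector; (2) there is an
`AP_b`-hypercyclic vector; (3) `T` is hypercyclic and for every nonempty open
`U` there is `k ≥ 1` with `⋂_{j=1}^m T^{-jk}(U) ≠ ∅` for every `m`; (4) for all
nonempty open `U, V` there is `k ≥ 1` such that for every `m` there are `k_m`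
and `x ∈ U` with `T^{k_m + jk}(x) ∈ V` for all `0 ≤ j ≤ m`; (5) the set of
`AP_b`-hypercyclic vectors is residual. -/
theorem APb_hypercyclic_tfae
    {X : Type*} [AddCommGroup X] [Module ℝ X] [UniformSpace X] [IsUniformAddGroup X]
    [ContinuousSMul ℝ X] [LocallyConvexSpace ℝ X] [CompleteSpace X]
    [Filter.IsCountablyGenerated (uniformity X)] [T2Space X]
    [TopologicalSpace.SeparableSpace X]
    (T : X →L[ℝ] X) :
    List.TFAE [
      -- (1) T is hypercyclic and every hypercyclic vector is AP_b-hypercyclic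
      (∃ x : X, Dense (Set.range fun n : ℕ => (T ^ n) x)) ∧
        (∀ x : X, Dense (Set.range fun n : ℕ => (T ^ n) x) →
          ∀ U : Set X, IsOpen U → U.Nonempty → APb {n : ℕ | (T ^ n) x ∈ U}),
      -- (2) there is an AP_b-hypercyclic vector
      ∃ x : X, ∀ U : Set X, IsOpen U → U.Nonempty → APb {n : ℕ | (T ^ n) x ∈ U},
      -- (3)
      (∃ x : X, Dense (Set.range fun n : ℕ => (T ^ n) x)) ∧
        (∀ U : Set X, IsOpen U → U.Nonempty → ∃ k : ℕ, 1 ≤ k ∧ ∀ m : ℕ,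
          (⋂ j ∈ Finset.Icc 1 m, (fun y : X => (T ^ (j * k)) y) ⁻¹' U).Nonempty),
      -- (4)
      (∀ U V : Set X, IsOpen U → U.Nonempty → IsOpen V → V.Nonempty →
        ∃ k : ℕ, 1 ≤ k ∧ ∀ m : ℕ, ∃ km : ℕ, ∃ x ∈ U,
          ∀ j : ℕ, j ≤ m → (T ^ (km + j * k)) x ∈ V),
      -- (5) the AP_b-hypercyclic vectors are residual
      {x : X | ∀ U : Set X, IsOpen U → U.Nonempty → APb {n : ℕ | (T ^ n) x ∈ U}}
        ∈ residual X
    ] :=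
  APb_hypercyclic_tfae_general T
end

section
/- Let T be an AP_b-hypercyclic bounded linear operator on a separable Banach space X. Then T is reiteratively hypercyclic, i.e., there exists x ∈ X such that N_T(x,U) has positive upper Banach density for every nonempty open U ⊆ X; in particular, T is weakly mixing. -/
open Metric

private lemma pow_apply_add' {X : Type*} [NormedAddCommGroup X] [NormedSpace ℝ X]
    (T : X →L[ℝ] X) (a b : ℕ) (z : X) : (T ^ (a + b)) z = (T ^ a) ((T ^ b) z) := by
  rw [pow_add, ContinuousLinearMap.mul_apply]

private lemma norm_pow_apply_le {X : Type*} [NormedAddCommGroup X] [NormedSpace ℝ X]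
    (T : X →L[ℝ] X) (i : ℕ) (z : X) : ‖(T ^ i) z‖ ≤ (1 + ‖T‖) ^ i * ‖z‖ := by
  induction i generalizing z with
  | zero => simp
  | succ n ih =>
    have h1 : (T ^ (n + 1)) z = (T ^ n) (T z) := by
      rw [pow_succ, ContinuousLinearMap.mul_apply]
    rw [h1]
    calc ‖(T ^ n) (T z)‖ ≤ (1 + ‖T‖) ^ n * ‖T z‖ := ih (T z)
    _ ≤ (1 + ‖T‖) ^ n * ((1 + ‖T‖) * ‖z‖) := by
        apply mul_le_mul_of_nonneg_left _ (by positivity)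
        calc ‖T z‖ ≤ ‖T‖ * ‖z‖ := T.le_opNorm z
        _ ≤ (1 + ‖T‖) * ‖z‖ := by nlinarith [norm_nonneg z, norm_nonneg T]
    _ = (1 + ‖T‖) ^ (n + 1) * ‖z‖ := by ring

private lemma norm_pow_apply_le' {X : Type*} [NormedAddCommGroup X] [NormedSpace ℝ X]
    (T : X →L[ℝ] X) {i L : ℕ} (h : i ≤ L) (z : X) :
    ‖(T ^ i) z‖ ≤ (1 + ‖T‖) ^ L * ‖z‖ := by
  refine le_trans (norm_pow_apply_le T i z) ?_
  apply mul_le_mul_of_nonneg_right _ (norm_nonneg z)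
  exact pow_le_pow_right₀ (by linarith [norm_nonneg T]) h

/-- every residue window of length `m + k` contains an element of `m + kℕ` -/
private lemma ap_hit (m k : ℕ) (hk : 1 ≤ k) (t : ℕ) :
    ∃ a : ℕ, t ≤ a ∧ a ≤ t + m + k ∧ ∃ j : ℕ, a = m + j * k := by
  induction t with
  | zero => exact ⟨m, Nat.zero_le _, by omega, 0, by ring⟩
  | succ t ih =>
    obtain ⟨a, h1, h2, j, hj⟩ := ih
    rcases Nat.lt_or_ge t a with h | h
    · exact ⟨a, by omega, by omega, j, hj⟩
    · -- a = t
      have ht : a = t := le_antisymm h h1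
      refine ⟨a + k, by omega, by omega, j + 1, ?_⟩
      rw [hj]; ring

private lemma visit_lemma {X : Type*} [NormedAddCommGroup X] [NormedSpace ℝ X]
    (T : X →L[ℝ] X) {x : X}
    (hx : ∀ U : Set X, IsOpen U → U.Nonempty → APb {n : ℕ | (T ^ n) x ∈ U})
    (U : Set X) (hU : IsOpen U) (hUn : U.Nonempty) (N : ℕ) :
    ∃ n, N ≤ n ∧ (T ^ n) x ∈ U := by
  obtain ⟨k, hk, hAP⟩ := hx U hU hUn
  obtain ⟨a, ha⟩ := hAP N
  refine ⟨a + N * k, ?_, ha N le_rfl⟩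
  have h1 : N * 1 ≤ N * k := Nat.mul_le_mul_left N hk
  omega

private lemma prog_lemma {X : Type*} [NormedAddCommGroup X] [NormedSpace ℝ X]
    (T : X →L[ℝ] X) {x : X}
    (hx : ∀ U : Set X, IsOpen U → U.Nonempty → APb {n : ℕ | (T ^ n) x ∈ U})
    (A : Set X) (hA : IsOpen A) (hAn : A.Nonempty) (B : Set X) (hB : IsOpen B) (hBn : B.Nonempty) :
    ∃ m k : ℕ, 1 ≤ k ∧ ∀ j : ℕ, ∃ y ∈ A, (T ^ (m + j * k)) y ∈ B := by
  obtain ⟨p, -, hp⟩ := visit_lemma T hx A hA hAn 0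
  obtain ⟨q, hpq, hq⟩ := visit_lemma T hx B hB hBn p
  have hmp : (q - p) + p = q := by omega
  set m := q - p with hm
  set W : Set X := A ∩ (⇑(T ^ m)) ⁻¹' B with hW
  have hWopen : IsOpen W := hA.inter (hB.preimage (T ^ m).continuous)
  have hWne : W.Nonempty := by
    refine ⟨(T ^ p) x, hp, ?_⟩
    show (T ^ m) ((T ^ p) x) ∈ B
    rw [← pow_apply_add', hmp]
    exact hq
  obtain ⟨k, hk, hAP⟩ := hx W hWopen hWne
  refine ⟨m, k, hk, fun j => ?_⟩
  obtain ⟨a, ha⟩ := hAP j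
  have h0 : (T ^ a) x ∈ W := by simpa using ha 0 (Nat.zero_le j)
  have hj : (T ^ (a + j * k)) x ∈ W := ha j le_rfl
  refine ⟨(T ^ a) x, h0.1, ?_⟩
  have he : (T ^ (m + j * k)) ((T ^ a) x) = (T ^ m) ((T ^ (a + j * k)) x) := by
    rw [← pow_apply_add', ← pow_apply_add']
    congr 1
    ring
  rw [he]
  exact hj.2

/-- An `AP_b`-hypercyclic bounded operator `T` on a separable
Banach space is reiteratively hypercyclic (some vector `x` has return sets
`N_T(x,U)` of positive upper Banach density for all nonempty open `U`);
in particular `T` is weakly mixing. -/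
theorem APb_hypercyclic_implies_reiteratively_hypercyclic_and_weakly_mixing
    {X : Type*} [NormedAddCommGroup X] [NormedSpace ℝ X] [CompleteSpace X]
    [TopologicalSpace.SeparableSpace X]
    (T : X →L[ℝ] X)
    (hAPb : ∃ x : X, ∀ U : Set X, IsOpen U → U.Nonempty → APb {n : ℕ | (T ^ n) x ∈ U}) :
    -- reiteratively hypercyclic
    (∃ x : X, ∀ U : Set X, IsOpen U → U.Nonempty →
      ∃ δ : ℝ, 0 < δ ∧ ∀ n : ℕ, ∃ k : ℕ,
        δ * (n + 1) ≤ ({m : ℕ | (T ^ m) x ∈ U ∧ k ≤ m ∧ m ≤ k + n}.ncard : ℝ)) ∧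
    -- weakly mixing
    (∀ U₁ U₂ V₁ V₂ : Set X, IsOpen U₁ → U₁.Nonempty → IsOpen U₂ → U₂.Nonempty →
      IsOpen V₁ → V₁.Nonempty → IsOpen V₂ → V₂.Nonempty →
      ∃ n : ℕ, ((fun y : X => (T ^ n) y) '' U₁ ∩ V₁).Nonempty ∧
        ((fun y : X => (T ^ n) y) '' U₂ ∩ V₂).Nonempty) := by
  obtain ⟨x, hx⟩ := hAPb
  constructor
  · -- reiteratively hypercyclic
    refine ⟨x, fun U hU hUn => ?_⟩
    obtain ⟨k, hk, hAP⟩ := hx U hU hUn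
    have hk0R : (0:ℝ) < k := by exact_mod_cast hk
    refine ⟨(k : ℝ)⁻¹, by positivity, fun n => ?_⟩
    obtain ⟨a, ha⟩ := hAP n
    refine ⟨a, ?_⟩
    set S : Set ℕ := {m : ℕ | (T ^ m) x ∈ U ∧ a ≤ m ∧ m ≤ a + n} with hS
    have hSfin : S.Finite := (Set.finite_Iic (a + n)).subset (fun m hm => hm.2.2)
    have hinj : Function.Injective (fun j : ℕ => a + j * k) := by
      intro i j h
      simp only at h
      exact Nat.eq_of_mul_eq_mul_right hk (by omega)
    set F : Finset ℕ := Finset.image (fun j => a + j * k) (Finset.range (n / k + 1)) with hF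
    have hFcard : F.card = n / k + 1 := by
      rw [hF, Finset.card_image_of_injective _ hinj, Finset.card_range]
    have hsub : (F : Set ℕ) ⊆ S := by
      intro m hm
      simp only [hF, Finset.coe_image, Finset.coe_range, Set.mem_image, Set.mem_Iio] at hm
      obtain ⟨j, hj, rfl⟩ := hm
      have hj' : j ≤ n / k := by omega
      have hjn : j ≤ n := le_trans hj' (Nat.div_le_self n k)
      have hjk : j * k ≤ n := le_trans (Nat.mul_le_mul_right k hj') (Nat.div_mul_le_self n k)
      exact ⟨ha j hjn, Nat.le_add_right _ _, by omega⟩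
    have hcard : n / k + 1 ≤ S.ncard := by
      calc n / k + 1 = F.card := hFcard.symm
      _ = (F : Set ℕ).ncard := (Set.ncard_coe_finset F).symm
      _ ≤ S.ncard := Set.ncard_le_ncard hsub hSfin
    have hnat : n + 1 ≤ k * (n / k + 1) := by
      have h1 := Nat.div_add_mod n k
      have h2 : n % k < k := Nat.mod_lt n hk
      have h3 : k * (n / k + 1) = k * (n / k) + k := by ring
      omega
    rw [inv_mul_le_iff₀ hk0R]
    calc (n:ℝ) + 1 ≤ ((k * (n / k + 1) : ℕ) : ℝ) := by exact_mod_cast hnat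
    _ ≤ (k : ℝ) * S.ncard := by
        push_cast
        have h4 : ((n / k + 1 : ℕ) : ℝ) ≤ (S.ncard : ℝ) := by exact_mod_cast hcard
        push_cast at h4
        nlinarith
  · -- weakly mixing
    intro U₁ U₂ V₁ V₂ hU₁ hU₁n hU₂ hU₂n hV₁ hV₁n hV₂ hV₂n
    obtain ⟨m₂, k₂, hk₂, h₂⟩ := prog_lemma T hx U₂ hU₂ hU₂n V₂ hV₂ hV₂n
    set L := m₂ + k₂ with hLdef
    clear_value L
    obtain ⟨u, hu⟩ := hU₁n
    obtain ⟨εu, hεu, hbu⟩ := Metric.isOpen_iff.mp hU₁ u hu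
    obtain ⟨v, hv⟩ := hV₁n
    obtain ⟨εv, hεv, hbv⟩ := Metric.isOpen_iff.mp hV₁ v hv
    set ε := min εu εv / 2 with hεdef
    have hεmin : 0 < min εu εv := lt_min hεu hεv
    have hε0 : 0 < ε := by rw [hεdef]; linarith
    have h2εu : 2 * ε ≤ εu := by
      have := min_le_left εu εv; rw [hεdef]; linarith
    have h2εv : 2 * ε ≤ εv := by
      have := min_le_right εu εv; rw [hεdef]; linarith
    have hT1 : (1:ℝ) ≤ 1 + ‖T‖ := by linarith [norm_nonneg T]
    set C := (1 + ‖T‖) ^ L with hCdef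
    have hC0 : 0 < C := by positivity
    set η := ε / (2 * C) with hηdef
    have hη0 : 0 < η := by positivity
    obtain ⟨m₁, k₁, hk₁, h₁⟩ := prog_lemma T hx (ball u ε) isOpen_ball
      ⟨u, mem_ball_self hε0⟩ (ball (0:X) η) isOpen_ball ⟨0, mem_ball_self hη0⟩
    set g := m₁ + k₁ with hgdef
    clear_value g
    set R := L + g with hRdef
    clear_value R
    set C' := (1 + ‖T‖) ^ R with hC'def
    have hC'0 : 0 < C' := by positivity
    set η' := ε / (2 * C') with hη'def
    have hη'0 : 0 < η' := by positivity
    obtain ⟨p, -, hp⟩ := visit_lemma T hx (ball (0:X) η') isOpen_ball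
      ⟨0, mem_ball_self hη'0⟩ 0
    obtain ⟨q, hq1, hq2⟩ := visit_lemma T hx (ball v ε) isOpen_ball
      ⟨v, mem_ball_self hε0⟩ (p + R)
    set s := q - p - R with hsdef
    clear_value s
    have hqs : q = p + R + s := by omega
    obtain ⟨n, hn1, hn2, j₁, hnj⟩ := ap_hit m₁ k₁ hk₁ s
    obtain ⟨N, hN1, hN2, j₂, hNj⟩ := ap_hit m₂ k₂ hk₂ n
    -- bounds
    have hNle : N ≤ s + R := by omega
    have hNn : N - n ≤ L := by omega
    -- the witness in ball u ε  with (T^n) small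
    obtain ⟨y₁, hy₁u, hy₁⟩ := h₁ j₁
    rw [← hnj] at hy₁
    -- the small vector w with T^N w = T^q x ∈ ball v ε
    obtain ⟨d, hdN⟩ : ∃ d, N + d = s + R := Nat.le.dest hNle
    have hd : d ≤ R := by omega
    set w := (T ^ (d + p)) x with hwdef
    have hwnorm : ‖w‖ ≤ ε / 2 := by
      have h5 : ‖(T ^ p) x‖ ≤ η' := by
        have := mem_ball_zero_iff.mp hp; linarith
      have h6 : ‖w‖ ≤ (1 + ‖T‖) ^ R * ‖(T ^ p) x‖ := by
        rw [hwdef, pow_apply_add']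
        exact norm_pow_apply_le' T hd _
      have h7 : (1 + ‖T‖) ^ R * ‖(T ^ p) x‖ ≤ C' * η' := by
        apply mul_le_mul_of_nonneg_left h5 (by positivity)
      have h8 : C' * η' = ε / 2 := by
        rw [hη'def]; field_simp
      linarith
    have hTNw : (T ^ N) w = (T ^ q) x := by
      have hNq : N + (d + p) = q := by omega
      rw [hwdef, ← pow_apply_add', hNq]
    have hTNy₁ : ‖(T ^ N) y₁‖ ≤ ε / 2 := by
      have he : N = (N - n) + n := by omega
      have h5 : ‖(T ^ n) y₁‖ ≤ η := by
        have := mem_ball_zero_iff.mp hy₁; linarith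
      have h6 : ‖(T ^ N) y₁‖ ≤ (1 + ‖T‖) ^ L * ‖(T ^ n) y₁‖ := by
        conv_lhs => rw [he, pow_apply_add']
        exact norm_pow_apply_le' T hNn _
      have h7 : (1 + ‖T‖) ^ L * ‖(T ^ n) y₁‖ ≤ C * η := by
        apply mul_le_mul_of_nonneg_left h5 (by positivity)
      have h8 : C * η = ε / 2 := by
        rw [hηdef]; field_simp
      linarith
    set z := y₁ + w with hzdef
    have hzU : z ∈ U₁ := by
      apply hbu
      have ht1 : dist z u ≤ dist y₁ u + ‖w‖ := by
        calc dist z u ≤ dist z y₁ + dist y₁ u := dist_triangle _ _ _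
        _ = ‖w‖ + dist y₁ u := by
            rw [hzdef, dist_eq_norm]; simp
        _ = dist y₁ u + ‖w‖ := by ring
      have ht2 : dist y₁ u < ε := mem_ball.mp hy₁u
      rw [mem_ball]
      linarith
    have hTz : (T ^ N) z ∈ V₁ := by
      apply hbv
      have hmap : (T ^ N) z = (T ^ N) y₁ + (T ^ N) w := by
        rw [hzdef, map_add]
      have ht1 : dist ((T ^ N) z) v ≤ ‖(T ^ N) y₁‖ + dist ((T ^ N) w) v := by
        calc dist ((T ^ N) z) v ≤ dist ((T ^ N) z) ((T ^ N) w) + dist ((T ^ N) w) v :=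
              dist_triangle _ _ _
        _ = ‖(T ^ N) y₁‖ + dist ((T ^ N) w) v := by
            rw [hmap, dist_eq_norm]; simp
      have ht2 : dist ((T ^ N) w) v < ε := by
        rw [hTNw]; exact mem_ball.mp hq2
      rw [mem_ball]
      linarith
    obtain ⟨y₂, hy₂, hTy₂⟩ := h₂ j₂
    rw [← hNj] at hTy₂
    exact ⟨N, ⟨(T ^ N) z, ⟨z, hzU, rfl⟩, hTz⟩, ⟨(T ^ N) y₂, ⟨y₂, hy₂, rfl⟩, hTy₂⟩⟩
end

section
/- Let T be a continuous linear operator on a separable Fréchet space X. If T is hypercyclic and has dense small periodic sets, then T is AP_b-hypercyclic. -/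
open Function Set

theorem apb_setOf_iterate_mem_of_mapsTo {X : Type*} [TopologicalSpace X] {f : X → X}
    (hf : Continuous f) {x : X} (hx : DenseRange fun n ↦ f^[n] x) {U Y : Set X} (hU : IsOpen U)
    (hY : Y.Nonempty) (hYU : Y ⊆ U) {k : ℕ} (hk : 1 ≤ k) (hmaps : MapsTo f^[k] Y Y) :
    APb {n | f^[n] x ∈ U} := by
  refine ⟨k, hk, fun m ↦ ?_⟩
  set V := ⋂ j ∈ Iic m, f^[j * k] ⁻¹' U
  have hV : IsOpen V := (finite_Iic m).isOpen_biInter fun j _ ↦ hU.preimage (hf.iterate _)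
  have hYV : Y ⊆ V := fun y hy ↦ mem_iInter₂.2 fun j _ ↦ by
    rw [mem_preimage, mul_comm, iterate_mul]
    exact hYU (hmaps.iterate j hy)
  obtain ⟨a, ha⟩ := hx.exists_mem_open hV (hY.mono hYV)
  refine ⟨a, fun j hj ↦ ?_⟩
  rw [mem_ofPred_eq, add_comm, iterate_add_apply]
  exact mem_iInter₂.1 ha j hj

theorem hypercyclic_denseSmallPeriodicSets_implies_APb_hypercyclic_general
    {X : Type*} [AddCommGroup X] [Module ℝ X] [UniformSpace X]
    (T : X →L[ℝ] X)
    (hHC : ∃ x : X, Dense (Set.range fun n : ℕ => (T ^ n) x))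
    (hDSP : ∀ U : Set X, IsOpen U → U.Nonempty →
      ∃ Y : Set X, Y.Nonempty ∧ IsClosed Y ∧ Y ⊆ U ∧
        ∃ k : ℕ, 1 ≤ k ∧ (fun y : X => (T ^ k) y) '' Y ⊆ Y) :
    ∃ x : X, ∀ U : Set X, IsOpen U → U.Nonempty → APb {n : ℕ | (T ^ n) x ∈ U} := by
  obtain ⟨x, hx⟩ := hHC
  refine ⟨x, fun U hU hUne ↦ ?_⟩
  obtain ⟨Y, hY, -, hYU, k, hk, hTk⟩ := hDSP U hU hUne
  simp only [FunLike.coe_pow_eq_iterate] at hx hTk ⊢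
  exact apb_setOf_iterate_mem_of_mapsTo T.continuous hx hU hY hYU hk (mapsTo_iff_image_subset.2 hTk)

/-- A hypercyclic continuous linear operator on a separable
Fréchet space that has dense small periodic sets is `AP_b`-hypercyclic. -/
theorem hypercyclic_denseSmallPeriodicSets_implies_APb_hypercyclic
    {X : Type*} [AddCommGroup X] [Module ℝ X] [UniformSpace X] [IsUniformAddGroup X]
    [ContinuousSMul ℝ X] [LocallyConvexSpace ℝ X] [CompleteSpace X]
    [Filter.IsCountablyGenerated (uniformity X)] [T2Space X]
    [TopologicalSpace.SeparableSpace X]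
    (T : X →L[ℝ] X)
    (hHC : ∃ x : X, Dense (Set.range fun n : ℕ => (T ^ n) x))
    (hDSP : ∀ U : Set X, IsOpen U → U.Nonempty →
      ∃ Y : Set X, Y.Nonempty ∧ IsClosed Y ∧ Y ⊆ U ∧
        ∃ k : ℕ, 1 ≤ k ∧ (fun y : X => (T ^ k) y) '' Y ⊆ Y) :
    ∃ x : X, ∀ U : Set X, IsOpen U → U.Nonempty → APb {n : ℕ | (T ^ n) x ∈ U} :=
  hypercyclic_denseSmallPeriodicSets_implies_APb_hypercyclic_general T hHC hDSP
end

section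
/- Let T be a bounded linear operator on a separable Banach space X which is AP_b-hypercyclic, let J : X → X** be the canonical embedding into the bidual, and let T** : X** → X** be the second adjoint of T. Then every point of J(X) is a norm limit of periodic points of T**; that is, for every x ∈ X and ε > 0 there exist Φ ∈ X** and n ≥ 1 with (T**)^n(Φ) = Φ and ‖J(x) − Φ‖ < ε. -/
open NormedSpace

/-!
Let `y` be an `AP_b`-hypercyclic vector. Its return times to the ball `B(x, ε/2)` contain
progressions `a_m, a_m + k, …, a_m + m k` of a fixed step `k`, so the Cesàro means `v_m` of the
`T^k`-orbit segments `T^{a_m} y, …, T^{a_m + m k} y` stay in the convex closed ball, and by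
telescoping `‖T^k v_m - v_m‖ = O(1/m)`. By Banach–Alaoglu the vectors `J v_m` have a weak-* cluster
point `Φ ∈ X**`. It is fixed by `(T**)^k = (T^k)**`, and it lies within `ε/2` of `J x` because the
norm of `X**` is weak-* lower semicontinuous.
-/

open Filter Topology Finset

section Transpose

variable {𝕜 E : Type*} [NontriviallyNormedField 𝕜] [SeminormedAddCommGroup E] [NormedSpace 𝕜 E]

theorem pow_apply_apply_of_transpose (A : E →L[𝕜] E)
    (B : StrongDual 𝕜 E →L[𝕜] StrongDual 𝕜 E) (hB : ∀ φ x, B φ x = φ (A x))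
    (n : ℕ) (φ : StrongDual 𝕜 E) (x : E) : (B ^ n) φ x = φ ((A ^ n) x) := by
  induction n generalizing φ with
  | zero => rfl
  | succ n ih => rw [pow_succ, mul_apply_eq_comp, ih, hB, pow_succ']; rfl

end Transpose

section OrbitAverage

variable {E : Type*} [NormedAddCommGroup E] [NormedSpace ℝ E]

noncomputable def orbitAverage (S : E →L[ℝ] E) (w : E) (m : ℕ) : E :=
  ((m : ℝ) + 1)⁻¹ • ∑ j ∈ range (m + 1), (S ^ j) w

theorem orbitAverage_mem {K : Set E} (hK : Convex ℝ K) {S : E →L[ℝ] E} {w : E} {m : ℕ}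
    (h : ∀ j ≤ m, (S ^ j) w ∈ K) : orbitAverage S w m ∈ K := by
  rw [orbitAverage, smul_sum]
  refine hK.sum_mem (fun _ _ => by positivity) ?_ fun j hj =>
    h j (Nat.lt_succ_iff.1 (mem_range.1 hj))
  rw [sum_const, card_range, nsmul_eq_mul]
  push_cast
  field_simp

theorem apply_orbitAverage_sub (S : E →L[ℝ] E) (w : E) (m : ℕ) :
    S (orbitAverage S w m) - orbitAverage S w m = ((m : ℝ) + 1)⁻¹ • ((S ^ (m + 1)) w - w) := by
  have telescope := sum_range_sub (fun j => (S ^ j) w) (m + 1)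
  simp only [pow_succ', mul_apply_eq_comp] at telescope
  rw [orbitAverage, map_smul, map_sum, ← smul_sub, ← sum_sub_distrib, telescope, pow_zero,
    one_apply_eq_self, pow_succ', mul_apply_eq_comp]

theorem tendsto_apply_orbitAverage_sub {K : Set E} (hK : Bornology.IsBounded K) (S : E →L[ℝ] E)
    (w : ℕ → E) (hw : ∀ m, ∀ j ≤ m, (S ^ j) (w m) ∈ K) :
    Tendsto (fun m => S (orbitAverage S (w m) m) - orbitAverage S (w m) m) atTop (𝓝 0) := by
  obtain ⟨R, hR⟩ := hK.exists_norm_le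
  have hbound : ∀ m, ‖(S ^ (m + 1)) (w m) - w m‖ ≤ ‖S‖ * R + R := fun m =>
    calc ‖(S ^ (m + 1)) (w m) - w m‖ ≤ ‖S ((S ^ m) (w m))‖ + ‖w m‖ := by
          rw [pow_succ', mul_apply_eq_comp]; exact norm_sub_le _ _
      _ ≤ ‖S‖ * R + R := by
          gcongr
          · exact S.le_opNorm_of_le (hR _ (hw m m le_rfl))
          · simpa using hR _ (hw m 0 (Nat.zero_le m))
  have hdecay := (tendsto_one_div_add_atTop_nhds_zero_nat (𝕜 := ℝ)).mul_const (‖S‖ * R + R)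
  rw [zero_mul] at hdecay
  refine squeeze_zero_norm (fun m => ?_) hdecay
  rw [apply_orbitAverage_sub, norm_smul, norm_inv, one_div, Real.norm_of_nonneg (by positivity)]
  gcongr
  exact hbound m

end OrbitAverage

section Bidual

variable {𝕜 E ι : Type*} [NontriviallyNormedField 𝕜] [SeminormedAddCommGroup E]
  [NormedSpace 𝕜 E]

-- Banach–Alaoglu for the closed balls of `E**`.
theorem exists_bidual_tendsto_apply_of_norm_le [ProperSpace 𝕜] (𝒰 : Ultrafilter ι)
    {v : ι → E} {R : ℝ} (hv : ∀ i, ‖v i‖ ≤ R) :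
    ∃ Φ : StrongDual 𝕜 (StrongDual 𝕜 E), ∀ φ, Tendsto (fun i => φ (v i)) 𝒰 (𝓝 (Φ φ)) := by
  let f : ι → WeakDual 𝕜 (StrongDual 𝕜 E) := fun i =>
    StrongDual.toWeakDual (inclusionInDoubleDual 𝕜 E (v i))
  have hball : (𝒰.map f : Filter (WeakDual 𝕜 (StrongDual 𝕜 E))) ≤
      𝓟 (WeakDual.toStrongDual ⁻¹' Metric.closedBall 0 R) := by
    rw [Ultrafilter.coe_map, le_principal_iff, Filter.mem_map]
    refine univ_mem' fun i => ?_
    exact Metric.mem_closedBall.2 ((dist_zero_right (inclusionInDoubleDual 𝕜 E (v i))).trans_le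
      ((double_dual_bound 𝕜 E (v i)).trans (hv i)))
  obtain ⟨Φ, -, hΦ⟩ := (WeakDual.isCompact_closedBall 0 R).ultrafilter_le_nhds _ hball
  exact ⟨WeakDual.toStrongDual Φ, fun φ => ((WeakDual.eval_continuous φ).tendsto Φ).comp hΦ⟩

variable {l : Filter ι} [l.NeBot] {v : ι → E} {Φ : StrongDual 𝕜 (StrongDual 𝕜 E)}

theorem norm_inclusionInDoubleDual_sub_le (hΦ : ∀ φ, Tendsto (fun i => φ (v i)) l (𝓝 (Φ φ)))
    {x : E} {δ : ℝ} (hx : ∀ᶠ i in l, ‖x - v i‖ ≤ δ) :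
    ‖inclusionInDoubleDual 𝕜 E x - Φ‖ ≤ δ := by
  have hδ : 0 ≤ δ := let ⟨i, hi⟩ := hx.exists; (norm_nonneg _).trans hi
  refine ContinuousLinearMap.opNorm_le_bound _ hδ fun φ => ?_
  rw [sub_apply, dual_def, mul_comm]
  have hlim : Tendsto (fun i => ‖φ (x - v i)‖) l (𝓝 ‖φ x - Φ φ‖) := by
    simpa only [map_sub] using (tendsto_const_nhds.sub (hΦ φ)).norm
  exact le_of_tendsto hlim (hx.mono fun i hi => φ.le_opNorm_of_le hi)

theorem apply_comp_eq_of_tendsto_sub (hΦ : ∀ φ, Tendsto (fun i => φ (v i)) l (𝓝 (Φ φ)))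
    {S : E →L[𝕜] E} (hS : Tendsto (fun i => S (v i) - v i) l (𝓝 0)) (φ : StrongDual 𝕜 E) :
    Φ (φ.comp S) = Φ φ := by
  refine tendsto_nhds_unique (hΦ (φ.comp S)) ?_
  have hsum := (hΦ φ).add ((φ.continuous.tendsto 0).comp hS)
  simpa only [ContinuousLinearMap.comp_apply, map_zero, add_zero, Function.comp_def, map_sub,
    add_sub_cancel] using hsum

end Bidual

theorem points_of_X_are_limits_of_biadjoint_periodic_points_general
    {X : Type*} [NormedAddCommGroup X] [NormedSpace ℝ X]
    (T : X →L[ℝ] X)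
    (hAPb : ∃ x : X, ∀ U : Set X, IsOpen U → U.Nonempty → APb {n : ℕ | (T ^ n) x ∈ U})
    (Ts : StrongDual ℝ X →L[ℝ] StrongDual ℝ X)
    (hTs : ∀ (φ : StrongDual ℝ X) (x : X), Ts φ x = φ (T x))
    (Tss : StrongDual ℝ (StrongDual ℝ X) →L[ℝ] StrongDual ℝ (StrongDual ℝ X))
    (hTss : ∀ (Φ : StrongDual ℝ (StrongDual ℝ X)) (φ : StrongDual ℝ X), Tss Φ φ = Φ (Ts φ)) :
    ∀ x : X, ∀ ε : ℝ, 0 < ε →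
      ∃ Φ : StrongDual ℝ (StrongDual ℝ X), ∃ n : ℕ, 1 ≤ n ∧ (Tss ^ n) Φ = Φ ∧
        ‖inclusionInDoubleDual ℝ X x - Φ‖ < ε := by
  obtain ⟨y, hy⟩ := hAPb
  intro x ε hε
  obtain ⟨k, hk, hprog⟩ := hy (Metric.ball x (ε / 2)) Metric.isOpen_ball
    ⟨x, Metric.mem_ball_self (by positivity)⟩
  choose a ha using hprog
  have horbit : ∀ m, ∀ j ≤ m, ((T ^ k) ^ j) ((T ^ a m) y) ∈ Metric.closedBall x (ε / 2) := by
    intro m j hj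
    rw [← mul_apply_eq_comp, ← pow_mul, ← pow_add, add_comm, mul_comm]
    exact Metric.ball_subset_closedBall (ha m j hj)
  let v m := orbitAverage (T ^ k) ((T ^ a m) y) m
  have hv m : v m ∈ Metric.closedBall x (ε / 2) :=
    orbitAverage_mem (convex_closedBall x _) (horbit m)
  obtain ⟨Φ, hΦ⟩ := exists_bidual_tendsto_apply_of_norm_le (𝕜 := ℝ) (Ultrafilter.of atTop)
    fun m => norm_le_of_mem_closedBall (hv m)
  have hfix := apply_comp_eq_of_tendsto_sub hΦ <|
    (tendsto_apply_orbitAverage_sub Metric.isBounded_closedBall _ _ horbit).mono_left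
      (Ultrafilter.of_le atTop)
  refine ⟨Φ, k, hk, ContinuousLinearMap.ext fun φ => ?_, ?_⟩
  · have hTsk : (Ts ^ k) φ = φ.comp (T ^ k) :=
      ContinuousLinearMap.ext (pow_apply_apply_of_transpose T Ts hTs k φ)
    rw [pow_apply_apply_of_transpose Ts Tss hTss, hTsk, hfix]
  · exact (norm_inclusionInDoubleDual_sub_le hΦ (Eventually.of_forall fun m =>
      mem_closedBall_iff_norm'.1 (hv m))).trans_lt (half_lt_self hε)

/-- Let `T` be an `AP_b`-hypercyclic bounded operator on a separable
Banach space `X`, let `J : X → X**` be the canonical embedding, and `T** : X** → X**`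
the second adjoint of `T` (here `Ts = T*` and `Tss = T**` are characterized by the
usual duality formulas). Then every point of `J(X)` is a norm limit of periodic points
of `T**`. -/
theorem points_of_X_are_limits_of_biadjoint_periodic_points
    {X : Type*} [NormedAddCommGroup X] [NormedSpace ℝ X] [CompleteSpace X]
    [TopologicalSpace.SeparableSpace X]
    (T : X →L[ℝ] X)
    (hAPb : ∃ x : X, ∀ U : Set X, IsOpen U → U.Nonempty → APb {n : ℕ | (T ^ n) x ∈ U})
    (Ts : StrongDual ℝ X →L[ℝ] StrongDual ℝ X)
    (hTs : ∀ (φ : StrongDual ℝ X) (x : X), Ts φ x = φ (T x))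
    (Tss : StrongDual ℝ (StrongDual ℝ X) →L[ℝ] StrongDual ℝ (StrongDual ℝ X))
    (hTss : ∀ (Φ : StrongDual ℝ (StrongDual ℝ X)) (φ : StrongDual ℝ X), Tss Φ φ = Φ (Ts φ)) :
    ∀ x : X, ∀ ε : ℝ, 0 < ε →
      ∃ Φ : StrongDual ℝ (StrongDual ℝ X), ∃ n : ℕ, 1 ≤ n ∧ (Tss ^ n) Φ = Φ ∧
        ‖inclusionInDoubleDual ℝ X x - Φ‖ < ε :=
  points_of_X_are_limits_of_biadjoint_periodic_points_general T hAPb Ts hTs Tss hTss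
end

section
/- Let E be a Banach space whose dual X = E* is norm-separable, and let T : X → X be a map that is norm-continuous and weak*-weak*-continuous (not necessarily linear). Then T is AP_b-hypercyclic if and only if T is hypercyclic and has dense small periodic sets. -/
/-!
`AP_b`-hypercyclicity gives hypercyclicity at once. Conversely, if `y` lies in a `T^k`-invariant
subset of `U`, then the finitely many conditions `T^(jk) z ∈ U`, `j ≤ m`, define an open
neighbourhood of `y`, which a dense orbit visits: this yields the progressions.

For the small periodic sets, take a closed ball `B ⊆ U` and the `AP_b` data of its interior:
points `q m` whose first `m` iterates under `g = T^k` stay in `B`. The weak*-closures `C N` of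
the points `g^j (q m)` with `N ≤ j ≤ m - N` are nested, nonempty, and weak*-compact by
Banach–Alaoglu, and `g` maps `C (N+1)` into `C N`. Their intersection is therefore a nonempty
`g`-invariant weak*-closed, hence norm-closed, subset of `B`.
-/

open NormedSpace

open Set Function

theorem APb.nonempty {A : Set ℕ} (hA : APb A) : A.Nonempty := by
  obtain ⟨k, -, hk⟩ := hA
  obtain ⟨a, ha⟩ := hk 0
  exact ⟨a + 0 * k, ha 0 le_rfl⟩

theorem iterate_add_mul_apply {α : Type*} (f : α → α) (a j k : ℕ) (x : α) :
    f^[a + j * k] x = (f^[k])^[j] (f^[a] x) := by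
  rw [add_comm, iterate_add_apply, mul_comm, iterate_mul]

section Orbits

variable {X : Type*} [TopologicalSpace X] {T : X → X} {x : X}

theorem dense_range_iterate_of_APb
    (hx : ∀ U : Set X, IsOpen U → U.Nonempty → APb {n : ℕ | T^[n] x ∈ U}) :
    Dense (range fun n : ℕ => T^[n] x) := by
  refine dense_iff_inter_open.2 fun U hU hUne => ?_
  obtain ⟨n, hn⟩ := (hx U hU hUne).nonempty
  exact ⟨T^[n] x, hn, n, rfl⟩

theorem APb_of_dense_range_iterate_of_mapsTo (hT : Continuous T)
    (hx : Dense (range fun n : ℕ => T^[n] x)) {U Y : Set X} (hU : IsOpen U) (hY : Y.Nonempty)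
    (hYU : Y ⊆ U) {k : ℕ} (hk : 1 ≤ k) (hYk : MapsTo T^[k] Y Y) :
    APb {n : ℕ | T^[n] x ∈ U} := by
  obtain ⟨y, hy⟩ := hY
  refine ⟨k, hk, fun m => ?_⟩
  set W := ⋂ j ∈ Iic m, (T^[k])^[j] ⁻¹' U
  have hWo : IsOpen W :=
    (finite_Iic m).isOpen_biInter fun j _ => hU.preimage ((hT.iterate k).iterate j)
  have hyW : y ∈ W := mem_iInter₂.2 fun j _ => hYU (hYk.iterate j hy)
  obtain ⟨_, ⟨n, rfl⟩, hnW⟩ := hx.exists_mem_open hWo ⟨y, hyW⟩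
  refine ⟨n, fun j hj => ?_⟩
  rw [mem_ofPred_eq, iterate_add_mul_apply]
  exact mem_iInter₂.1 hnW j hj

end Orbits

theorem exists_nonempty_isClosed_mapsTo_of_iterate_mem {X : Type*} [TopologicalSpace X]
    {g : X → X} (hg : Continuous g) {K : Set X} (hK : IsCompact K) (hKc : IsClosed K)
    {q : ℕ → X} (hq : ∀ m j, j ≤ m → g^[j] (q m) ∈ K) :
    ∃ Y : Set X, Y.Nonempty ∧ IsClosed Y ∧ Y ⊆ K ∧ MapsTo g Y Y := by
  set S : ℕ → Set X := fun N => {z | ∃ m j, N ≤ j ∧ j + N ≤ m ∧ g^[j] (q m) = z}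
  set C : ℕ → Set X := fun N => closure (S N)
  have hCK : ∀ N, C N ⊆ K := fun N => closure_minimal
    (by rintro _ ⟨m, j, -, hjm, rfl⟩; exact hq m j (by omega)) hKc
  have hC_succ : ∀ N, C (N + 1) ⊆ C N := fun N => closure_mono <| by
    rintro _ ⟨m, j, hNj, hjm, rfl⟩; exact ⟨m, j, by omega, by omega, rfl⟩
  have hC_nonempty : ∀ N, (C N).Nonempty := fun N =>
    ⟨_, subset_closure ⟨N + N, N, le_rfl, le_rfl, rfl⟩⟩
  have hg_C : ∀ N, MapsTo g (C (N + 1)) (C N) := fun N =>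
    MapsTo.closure (by
      rintro _ ⟨m, j, hNj, hjm, rfl⟩
      exact ⟨m, j + 1, by omega, by omega, iterate_succ_apply' g j (q m)⟩) hg
  refine ⟨⋂ N, C N, ?_, isClosed_iInter fun N => isClosed_closure,
    (iInter_subset C 0).trans (hCK 0), fun z hz => mem_iInter.2 fun N => ?_⟩
  · exact IsCompact.nonempty_iInter_of_sequence_nonempty_isCompact_isClosed C hC_succ
      hC_nonempty (hK.of_isClosed_subset isClosed_closure (hCK 0)) fun N => isClosed_closure
  · exact hg_C N (mem_iInter.1 hz (N + 1))

section WeakStar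

variable {𝕜 E : Type*} [NontriviallyNormedField 𝕜] [SeminormedAddCommGroup E]
  [NormedSpace 𝕜 E]

def WeakStarContinuous (T : StrongDual 𝕜 E → StrongDual 𝕜 E) : Prop :=
  Continuous fun φ : WeakDual 𝕜 E => StrongDual.toWeakDual (T (StrongDual.toWeakDual.symm φ))

theorem WeakStarContinuous.iterate {T : StrongDual 𝕜 E → StrongDual 𝕜 E}
    (hT : WeakStarContinuous T) (n : ℕ) : WeakStarContinuous T^[n] := by
  set Tw : WeakDual 𝕜 E → WeakDual 𝕜 E :=
    fun φ => StrongDual.toWeakDual (T (StrongDual.toWeakDual.symm φ))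
  have hconj : Semiconj StrongDual.toWeakDual.symm Tw T := fun φ =>
    StrongDual.toWeakDual.symm_apply_apply _
  have : (fun φ => StrongDual.toWeakDual (T^[n] (StrongDual.toWeakDual.symm φ))) = Tw^[n] := by
    funext φ
    rw [← (hconj.iterate_right n) φ, LinearEquiv.apply_symm_apply]
  rw [WeakStarContinuous, this]
  exact Continuous.iterate hT n

theorem exists_nonempty_isClosed_mapsTo_subset_closedBall [ProperSpace 𝕜]
    {g : StrongDual 𝕜 E → StrongDual 𝕜 E} (hg : WeakStarContinuous g)
    {u : StrongDual 𝕜 E} {r : ℝ} {q : ℕ → StrongDual 𝕜 E}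
    (hq : ∀ m j, j ≤ m → g^[j] (q m) ∈ Metric.closedBall u r) :
    ∃ Y : Set (StrongDual 𝕜 E), Y.Nonempty ∧ IsClosed Y ∧ Y ⊆ Metric.closedBall u r ∧
      MapsTo g Y Y := by
  set ι := StrongDual.toWeakDual (𝕜 := 𝕜) (E := E)
  set gw : WeakDual 𝕜 E → WeakDual 𝕜 E := fun φ => ι (g (ι.symm φ))
  have hconj : Semiconj ι g gw := fun z => by simp [gw]
  obtain ⟨Y, ⟨φ, hφ⟩, hYc, hYB, hYg⟩ := exists_nonempty_isClosed_mapsTo_of_iterate_mem hg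
    (WeakDual.isCompact_closedBall u r) (WeakDual.isClosed_closedBall u r)
    (q := fun m => ι (q m)) fun m j hj => by
      rw [← (hconj.iterate_right j) (q m)]
      exact hq m j hj
  refine ⟨ι ⁻¹' Y, ⟨ι.symm φ, by simpa using hφ⟩, hYc.preimage Dual.toWeakDual_continuous,
    fun z hz => hYB hz, fun z hz => ?_⟩
  rw [mem_preimage, hconj z]
  exact hYg hz

theorem exists_nonempty_isClosed_mapsTo_iterate_of_APb [ProperSpace 𝕜]
    {T : StrongDual 𝕜 E → StrongDual 𝕜 E} (hT : WeakStarContinuous T) {x : StrongDual 𝕜 E}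
    (hx : ∀ U : Set (StrongDual 𝕜 E), IsOpen U → U.Nonempty → APb {n : ℕ | T^[n] x ∈ U})
    {U : Set (StrongDual 𝕜 E)} (hU : IsOpen U) (hUne : U.Nonempty) :
    ∃ Y : Set (StrongDual 𝕜 E), Y.Nonempty ∧ IsClosed Y ∧ Y ⊆ U ∧
      ∃ k : ℕ, 1 ≤ k ∧ MapsTo T^[k] Y Y := by
  obtain ⟨u, hu⟩ := hUne
  obtain ⟨r, hr, hrU⟩ := Metric.nhds_basis_closedBall.mem_iff.1 (hU.mem_nhds hu)
  obtain ⟨k, hk, hprog⟩ := hx _ Metric.isOpen_ball ⟨u, Metric.mem_ball_self hr⟩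
  choose a ha using hprog
  obtain ⟨Y, hY, hYc, hYB, hYk⟩ := exists_nonempty_isClosed_mapsTo_subset_closedBall
    (hT.iterate k) (q := fun m => T^[a m] x) fun m j hj => by
      have := ha m j hj
      rw [mem_ofPred_eq, iterate_add_mul_apply] at this
      exact Metric.ball_subset_closedBall this
  exact ⟨Y, hY, hYc, hYB.trans hrU, k, hk, hYk⟩

end WeakStar

theorem APb_hypercyclic_iff_hypercyclic_and_denseSmallPeriodicSets_general
    {E : Type*} [NormedAddCommGroup E] [NormedSpace ℝ E]
    (T : StrongDual ℝ E → StrongDual ℝ E)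
    (hTn : Continuous T)
    (hTw : Continuous fun φ : WeakDual ℝ E =>
      StrongDual.toWeakDual (T (StrongDual.toWeakDual.symm φ))) :
    (∃ x : StrongDual ℝ E, ∀ U : Set (StrongDual ℝ E), IsOpen U → U.Nonempty →
      APb {n : ℕ | T^[n] x ∈ U}) ↔
    ((∃ x : StrongDual ℝ E, Dense (Set.range fun n : ℕ => T^[n] x)) ∧
      (∀ U : Set (StrongDual ℝ E), IsOpen U → U.Nonempty →
        ∃ Y : Set (StrongDual ℝ E), Y.Nonempty ∧ IsClosed Y ∧ Y ⊆ U ∧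
          ∃ k : ℕ, 1 ≤ k ∧ T^[k] '' Y ⊆ Y)) := by
  constructor
  · rintro ⟨x, hx⟩
    refine ⟨⟨x, dense_range_iterate_of_APb hx⟩, fun U hU hUne => ?_⟩
    obtain ⟨Y, hY, hYc, hYU, k, hk, hYk⟩ :=
      exists_nonempty_isClosed_mapsTo_iterate_of_APb hTw hx hU hUne
    exact ⟨Y, hY, hYc, hYU, k, hk, hYk.image_subset⟩
  · rintro ⟨⟨x, hx⟩, hper⟩
    refine ⟨x, fun U hU hUne => ?_⟩
    obtain ⟨Y, hY, -, hYU, k, hk, hYk⟩ := hper U hU hUne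
    exact APb_of_dense_range_iterate_of_mapsTo hTn hx hU hY hYU hk (mapsTo_iff_image_subset.2 hYk)

/-- Let `E` be a Banach space whose dual `X = E*` is norm-separable,
and let `T : X → X` be norm-continuous and weak*-weak*-continuous (not necessarily
linear). Then `T` is `AP_b`-hypercyclic if and only if `T` is hypercyclic and has
dense small periodic sets. -/
theorem APb_hypercyclic_iff_hypercyclic_and_denseSmallPeriodicSets
    {E : Type*} [NormedAddCommGroup E] [NormedSpace ℝ E] [CompleteSpace E]
    [TopologicalSpace.SeparableSpace (StrongDual ℝ E)]
    (T : StrongDual ℝ E → StrongDual ℝ E)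
    (hTn : Continuous T)
    (hTw : Continuous fun φ : WeakDual ℝ E =>
      StrongDual.toWeakDual (T (StrongDual.toWeakDual.symm φ))) :
    (∃ x : StrongDual ℝ E, ∀ U : Set (StrongDual ℝ E), IsOpen U → U.Nonempty →
      APb {n : ℕ | T^[n] x ∈ U}) ↔
    ((∃ x : StrongDual ℝ E, Dense (Set.range fun n : ℕ => T^[n] x)) ∧
      (∀ U : Set (StrongDual ℝ E), IsOpen U → U.Nonempty →
        ∃ Y : Set (StrongDual ℝ E), Y.Nonempty ∧ IsClosed Y ∧ Y ⊆ U ∧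
          ∃ k : ℕ, 1 ≤ k ∧ T^[k] '' Y ⊆ Y)) :=
  APb_hypercyclic_iff_hypercyclic_and_denseSmallPeriodicSets_general T hTn hTw
end

section
/- Let X be a separable reflexive Banach space (i.e. the canonical embedding J : X → X** is surjective) and let T be a bounded linear operator on X. Then T is chaotic if and only if there exists x ∈ X such that for each nonempty open set U ⊆ X the set N_T(x,U) contains arbitrarily long arithmetic progressions of common difference k for some fixed k ≥ 1 (i.e. T is AP_b-hypercyclic). -/
open Filter Function Metric Set Topology

lemma dense_range_of_forall_APb {α : Type*} [TopologicalSpace α] {g : ℕ → α}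
    (h : ∀ U : Set α, IsOpen U → U.Nonempty → APb {n | g n ∈ U}) : Dense (range g) := by
  refine dense_iff_inter_open.2 fun U hU hne => ?_
  obtain ⟨k, -, hk⟩ := h U hU hne
  obtain ⟨a, ha⟩ := hk 0
  exact ⟨g a, by simpa using ha 0 le_rfl, a, rfl⟩

lemma APb_setOf_iterate_mem_of_dense_periodicPts {α : Type*} [TopologicalSpace α] {f : α → α}
    (hf : Continuous f) {x : α} (hx : Dense (range fun n => f^[n] x))
    (hper : Dense (periodicPts f)) {U : Set α} (hU : IsOpen U) (hne : U.Nonempty) :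
    APb {n | f^[n] x ∈ U} := by
  obtain ⟨p, ⟨k, hk, hp⟩, hpU⟩ := hper.exists_mem_open hU hne
  refine ⟨k, hk, fun m => ?_⟩
  set V := ⋂ j ∈ Finset.range (m + 1), f^[j * k] ⁻¹' U
  have hV : IsOpen V :=
    isOpen_biInter_finset fun j _ => hU.preimage (hf.iterate _)
  have hpV : p ∈ V := by
    simp only [V, mem_iInter, mem_preimage]
    intro j _
    rwa [(hp.const_mul j).eq]
  obtain ⟨_, ⟨a, rfl⟩, haV⟩ := hx.exists_mem_open hV ⟨p, hpV⟩
  refine ⟨a, fun j hj => ?_⟩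
  simp only [V, mem_iInter, mem_preimage] at haV
  show f^[a + j * k] x ∈ U
  rw [add_comm, iterate_add_apply]
  exact haV j (Finset.mem_range.2 (Nat.lt_succ_of_le hj))

section Reflexive

variable {X : Type*} [NormedAddCommGroup X] [NormedSpace ℝ X]

theorem isCompact_toWeakSpace_closedBall
    (hrefl : Surjective (NormedSpace.inclusionInDoubleDual ℝ X)) (z : X) (r : ℝ) :
    IsCompact (toWeakSpace ℝ X '' closedBall z r) := by
  have hclosed :
      closure (toWeakSpace ℝ X '' closedBall z r) = toWeakSpace ℝ X '' closedBall z r := by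
    rw [← (convex_closedBall z r).toWeakSpace_closure ℝ, isClosed_closedBall.closure_eq]
  rw [← hclosed]
  refine NormedSpace.isCompact_closure_of_isBounded ℝ X _ ?_ ?_
  · rw [(toWeakSpace ℝ X).injective.preimage_image]
    exact isBounded_closedBall
  · rw [(show Surjective (NormedSpace.inclusionInDoubleDualWeak ℝ X) from hrefl).range_eq]
    exact subset_univ _

/-- Weak compactness of closed balls: a weak cluster point `w` of `y` is sent by the weakly
continuous map `A` to a weak cluster point of `A ∘ y`, which can only be its norm limit `0`. -/
theorem exists_mem_closedBall_apply_eq_zero_of_tendsto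
    (hrefl : Surjective (NormedSpace.inclusionInDoubleDual ℝ X))
    {Y : Type*} [NormedAddCommGroup Y] [NormedSpace ℝ Y] (A : X →L[ℝ] Y) {z : X} {r : ℝ}
    {y : ℕ → X} (hy : ∀ n, y n ∈ closedBall z r) (hA : Tendsto (fun n => A (y n)) atTop (𝓝 0)) :
    ∃ w ∈ closedBall z r, A w = 0 := by
  obtain ⟨_, ⟨w, hw, rfl⟩, hclus⟩ :=
    (isCompact_toWeakSpace_closedBall hrefl z r).exists_mapClusterPt (f := atTop)
      (u := fun n => toWeakSpace ℝ X (y n))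
      (tendsto_principal.2 (Eventually.of_forall fun n => mem_image_of_mem _ (hy n)))
  refine ⟨w, hw, ?_⟩
  have hAw : MapClusterPt (WeakSpace.map A (toWeakSpace ℝ X w)) atTop
      (fun n => toWeakSpace ℝ Y (A (y n))) :=
    hclus.continuousAt_comp (WeakSpace.map A).continuous.continuousAt
  have hweak : Tendsto (fun n => toWeakSpace ℝ Y (A (y n))) atTop (𝓝 0) := by
    have := ((toWeakSpaceCLM ℝ Y).continuous.tendsto 0).comp hA
    rwa [map_zero] at this
  have hAw0 : WeakSpace.map A (toWeakSpace ℝ X w) = 0 :=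
    eq_of_nhds_neBot (ClusterPt.mono hAw hweak)
  exact hAw0

noncomputable def cesaroMean (S : X →L[ℝ] X) (n : ℕ) (v : X) : X :=
  (n : ℝ)⁻¹ • ∑ j ∈ Finset.range n, S^[j] v

lemma cesaroMean_mem {s : Set X} (hs : Convex ℝ s) (S : X →L[ℝ] X) {n : ℕ} (hn : 0 < n) {v : X}
    (h : ∀ j < n, S^[j] v ∈ s) : cesaroMean S n v ∈ s := by
  rw [cesaroMean, Finset.smul_sum]
  refine hs.sum_mem (fun _ _ => by positivity) ?_ fun j hj => h j (Finset.mem_range.1 hj)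
  rw [Finset.sum_const, Finset.card_range, nsmul_eq_mul]
  exact mul_inv_cancel₀ (Nat.cast_ne_zero.2 hn.ne')

lemma apply_cesaroMean_sub (S : X →L[ℝ] X) (n : ℕ) (v : X) :
    S (cesaroMean S n v) - cesaroMean S n v = (n : ℝ)⁻¹ • (S^[n] v - v) := by
  simp only [cesaroMean, map_smul, map_sum, ← smul_sub, ← iterate_succ_apply' S,
    ← Finset.sum_sub_distrib]
  exact congrArg _ (Finset.sum_range_sub (fun j => S^[j] v) n)

theorem exists_isFixedPt_mem_closedBall
    (hrefl : Surjective (NormedSpace.inclusionInDoubleDual ℝ X)) (S : X →L[ℝ] X) {z : X}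
    {r : ℝ} (h : ∀ n, ∃ v, ∀ j ≤ n, S^[j] v ∈ closedBall z r) :
    ∃ w ∈ closedBall z r, IsFixedPt S w := by
  choose v hv using h
  set y : ℕ → X := fun n => cesaroMean S (n + 1) (v (n + 1))
  have hy (n : ℕ) : y n ∈ closedBall z r :=
    cesaroMean_mem (convex_closedBall z r) S n.succ_pos fun j hj => hv _ j hj.le
  have hbound (n : ℕ) : ‖(S - 1) (y n)‖ ≤ 2 * r * (1 / ((n : ℝ) + 1)) := by
    have hdist : dist (S^[n + 1] (v (n + 1))) (v (n + 1)) ≤ r + r :=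
      (dist_triangle_right _ _ z).trans
        (add_le_add (hv _ _ le_rfl) (hv _ 0 (Nat.zero_le _)))
    rw [sub_apply, one_apply_eq_self, apply_cesaroMean_sub,
      norm_smul, ← dist_eq_norm, Real.norm_of_nonneg (by positivity)]
    push_cast
    calc ((n : ℝ) + 1)⁻¹ * dist (S^[n + 1] (v (n + 1))) (v (n + 1))
        ≤ ((n : ℝ) + 1)⁻¹ * (r + r) := by gcongr
      _ = 2 * r * (1 / ((n : ℝ) + 1)) := by ring
  have htend : Tendsto (fun n => (S - 1) (y n)) atTop (𝓝 0) :=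
    squeeze_zero_norm hbound <| by
      simpa using tendsto_one_div_add_atTop_nhds_zero_nat.const_mul (2 * r)
  obtain ⟨w, hw, hw0⟩ := exists_mem_closedBall_apply_eq_zero_of_tendsto hrefl (S - 1) hy htend
  refine ⟨w, hw, sub_eq_zero.1 ?_⟩
  rwa [sub_apply, one_apply_eq_self] at hw0

theorem dense_periodicPts_of_forall_APb
    (hrefl : Surjective (NormedSpace.inclusionInDoubleDual ℝ X)) (T : X →L[ℝ] X) {x : X}
    (h : ∀ U : Set X, IsOpen U → U.Nonempty → APb {n | T^[n] x ∈ U}) :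
    Dense (periodicPts T) := by
  refine Metric.dense_iff.2 fun z ε hε => ?_
  obtain ⟨k, hk, hAP⟩ := h (ball z (ε / 2)) isOpen_ball (nonempty_ball.2 (half_pos hε))
  obtain ⟨w, hw, hfix⟩ : ∃ w ∈ closedBall z (ε / 2), IsFixedPt (T ^ k) w := by
    refine exists_isFixedPt_mem_closedBall hrefl (T ^ k) fun n => ?_
    obtain ⟨a, ha⟩ := hAP n
    refine ⟨T^[a] x, fun j hj => ball_subset_closedBall ?_⟩
    rw [FunLike.coe_pow_eq_iterate, ← iterate_mul, ← iterate_add_apply, mul_comm, add_comm]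
    exact ha j hj
  rw [FunLike.coe_pow_eq_iterate] at hfix
  exact ⟨w, closedBall_subset_ball (half_lt_self hε) hw, k, hk, hfix⟩

end Reflexive

theorem chaotic_iff_APb_hypercyclic_on_reflexive_general
    {X : Type*} [NormedAddCommGroup X] [NormedSpace ℝ X]
    (hrefl : Function.Surjective (NormedSpace.inclusionInDoubleDual ℝ X))
    (T : X →L[ℝ] X) :
    ((∃ x : X, Dense (Set.range fun n : ℕ => (T ^ n) x)) ∧
      Dense {x : X | ∃ n : ℕ, 1 ≤ n ∧ (T ^ n) x = x}) ↔
    (∃ x : X, ∀ U : Set X, IsOpen U → U.Nonempty → APb {n : ℕ | (T ^ n) x ∈ U}) := by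
  simp only [FunLike.coe_pow_eq_iterate]
  constructor
  · rintro ⟨⟨x, hx⟩, hper⟩
    exact ⟨x, fun U hU hne =>
      APb_setOf_iterate_mem_of_dense_periodicPts T.continuous hx hper hU hne⟩
  · rintro ⟨x, hx⟩
    exact ⟨⟨x, dense_range_of_forall_APb hx⟩, dense_periodicPts_of_forall_APb hrefl T hx⟩

/-- Let `X` be a separable reflexive Banach space (the canonical
embedding `J : X → X**` is surjective) and `T` a bounded linear operator on `X`.
Then `T` is chaotic if and only if `T` is `AP_b`-hypercyclic. -/
theorem chaotic_iff_APb_hypercyclic_on_reflexive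
    {X : Type*} [NormedAddCommGroup X] [NormedSpace ℝ X] [CompleteSpace X]
    [TopologicalSpace.SeparableSpace X]
    (hrefl : Function.Surjective (NormedSpace.inclusionInDoubleDual ℝ X))
    (T : X →L[ℝ] X) :
    ((∃ x : X, Dense (Set.range fun n : ℕ => (T ^ n) x)) ∧
      Dense {x : X | ∃ n : ℕ, 1 ≤ n ∧ (T ^ n) x = x}) ↔
    (∃ x : X, ∀ U : Set X, IsOpen U → U.Nonempty → APb {n : ℕ | (T ^ n) x ∈ U}) :=
  chaotic_iff_APb_hypercyclic_on_reflexive_general hrefl T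
end

section
/- Let c₀ be the Banach space of scalar sequences (x_n)_{n≥1} converging to 0, with the supremum norm, let (w_n)_{n≥1} be a bounded sequence of nonzero scalars, and let B_w : c₀ → c₀ be the weighted backward shift B_w((x_n)_{n≥1}) = (w_{n+1} x_{n+1})_{n≥1}. Then B_w is chaotic if and only if B_w has dense small periodic sets. -/
open scoped ZeroAtInfty

/-! In the coordinates `u n = (w 1 ⋯ w n) * x n` the weighted shift becomes the plain backward
shift, so everything is governed by the products `P n = w 1 ⋯ w n`. A small periodic set of
`T ^ k` inside `{x | 1/2 < ‖x 0‖}` forces `‖P (k m)‖ * ‖y (k m)‖ > 1/2` along an orbit, hence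
`‖P n‖ → ∞`, the bounded weights filling the gaps between multiples of `k`. Conversely, once
`‖P n‖ → ∞`, a finitely supported vector can, in these coordinates, be repeated periodically or
pushed far to the right at arbitrarily small cost in norm. This gives dense periodic points and
topological transitivity, and Birkhoff's transitivity theorem (Baire category in the separable
space `c₀`) turns transitivity into a vector with dense orbit. -/

open Filter Topology Set

theorem exists_dense_orbit_of_transitive {X : Type*} [TopologicalSpace X] [BaireSpace X]
    [SecondCountableTopology X] [Nonempty X] {f : X → X} (hf : Continuous f)
    (htrans : ∀ U V : Set X, IsOpen U → U.Nonempty → IsOpen V → V.Nonempty →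
      ∃ n, (U ∩ f^[n] ⁻¹' V).Nonempty) :
    ∃ x, Dense (range fun n => f^[n] x) := by
  obtain ⟨b, hbc, hb0, hb⟩ := TopologicalSpace.exists_countable_basis X
  have hdense : Dense (⋂ V ∈ b, ⋃ n, f^[n] ⁻¹' V) := by
    refine dense_biInter_of_isOpen
      (fun V hV => isOpen_iUnion fun n => (hb.isOpen hV).preimage (hf.iterate n)) hbc
      fun V hV => dense_iff_inter_open.2 fun U hU hUne => ?_
    obtain ⟨n, x, hxU, hxV⟩ :=
      htrans U V hU hUne (hb.isOpen hV) (nonempty_iff_ne_empty.2 fun h => hb0 (h ▸ hV))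
    exact ⟨x, hxU, mem_iUnion.2 ⟨n, hxV⟩⟩
  obtain ⟨x, hx⟩ := hdense.nonempty
  refine ⟨x, hb.dense_iff.2 fun V hV _ => ?_⟩
  obtain ⟨n, hn⟩ := mem_iUnion.1 (mem_iInter₂.1 hx V hV)
  exact ⟨_, hn, n, rfl⟩

theorem tendsto_atTop_of_lt_mul {α : Type*} {l : Filter α} {f g : α → ℝ} {c : ℝ} (hc : 0 < c)
    (hg : Tendsto g l (𝓝 0)) (hg0 : ∀ x, 0 ≤ g x) (hfg : ∀ x, c < f x * g x) :
    Tendsto f l atTop := by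
  have hgpos : ∀ x, 0 < g x := fun x =>
    (hg0 x).lt_of_ne fun h => absurd (hfg x) (by simp [← h, hc.le])
  have hinv : Tendsto (fun x => c * (g x)⁻¹) l atTop :=
    (tendsto_nhdsWithin_iff.2 ⟨hg, .of_forall hgpos⟩).inv_tendsto_nhdsGT_zero.const_mul_atTop hc
  refine tendsto_atTop_mono (fun x => ?_) hinv
  rw [← div_eq_mul_inv, div_le_iff₀ (hgpos x)]
  exact (hfg x).le

namespace ZeroAtInftyContinuousMap

section Norm

variable {α E : Type*} [TopologicalSpace α] [NormedAddCommGroup E]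

instance : ContinuousEvalConst C₀(α, E) α E where
  continuous_eval_const a :=
    ((continuous_apply a).comp BoundedContinuousFunction.continuous_coe).comp
      isometry_toBCF.continuous

theorem norm_le_of_forall {x : C₀(α, E)} {C : ℝ} (hC : 0 ≤ C) (h : ∀ a, ‖x a‖ ≤ C) :
    ‖x‖ ≤ C := by
  rw [← norm_toBCF_eq_norm]
  exact (BoundedContinuousFunction.norm_le hC).2 h

end Norm

section Sequence

variable {E : Type*} [NormedAddCommGroup E]

theorem tendsto_apply_atTop (x : C₀(ℕ, E)) : Tendsto x atTop (𝓝 0) := by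
  simpa [cocompact_eq_atTop] using zero_at_infty x

def ofTendsto (u : ℕ → E) (hu : Tendsto u atTop (𝓝 0)) : C₀(ℕ, E) where
  toFun := u
  continuous_toFun := continuous_of_discreteTopology
  zero_at_infty' := by rwa [cocompact_eq_atTop]

@[simp]
theorem ofTendsto_apply (u : ℕ → E) (hu : Tendsto u atTop (𝓝 0)) (n : ℕ) :
    ofTendsto u hu n = u n :=
  rfl

def single (i : ℕ) (a : E) : C₀(ℕ, E) :=
  ofTendsto (Pi.single i a : ℕ → E) (tendsto_nhds_of_eventually_eq
    (eventually_atTop.2 ⟨i + 1, fun _ hn => Pi.single_eq_of_ne (by omega) _⟩))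

@[simp]
theorem single_apply (i : ℕ) (a : E) (n : ℕ) : single i a n = (Pi.single i a : ℕ → E) n :=
  rfl

theorem dense_setOf_eventually_eq_zero : Dense {x : C₀(ℕ, E) | ∀ᶠ n in atTop, x n = 0} := by
  refine Metric.dense_iff.2 fun x ε hε => ?_
  obtain ⟨N, hN⟩ := eventually_atTop.1
    ((NormedAddGroup.tendsto_nhds_zero.1 (tendsto_apply_atTop x)) (ε / 2) (half_pos hε))
  have htrunc : ∀ᶠ n in atTop, (Iio N).indicator x n = 0 :=
    eventually_atTop.2 ⟨N, fun n hn => indicator_of_notMem (by simpa using hn) x⟩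
  refine ⟨ofTendsto _ (tendsto_nhds_of_eventually_eq htrunc), ?_, htrunc⟩
  rw [Metric.mem_ball, dist_eq_norm']
  refine (norm_le_of_forall (half_pos hε).le fun n => ?_).trans_lt (half_lt_self hε)
  by_cases hn : n < N
  · simp [hn, (half_pos hε).le]
  · simpa [hn] using (hN n (not_lt.1 hn)).le

theorem mem_span_range_single_of_forall_apply_eq_zero {𝕜 : Type*} [NormedField 𝕜] :
    ∀ (N : ℕ) (x : C₀(ℕ, 𝕜)), (∀ n, N ≤ n → x n = 0) →
      x ∈ Submodule.span 𝕜 (range fun i => single i (1 : 𝕜))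
  | 0, x, hx => by simp [show x = 0 from ext fun n => hx n n.zero_le]
  | N + 1, x, hx => by
    have hx' : x - x N • single N 1 ∈ Submodule.span 𝕜 (range fun i => single i (1 : 𝕜)) := by
      refine mem_span_range_single_of_forall_apply_eq_zero N _ fun n hn => ?_
      rcases hn.eq_or_lt with rfl | hlt
      · simp
      · simp [hx n hlt, Pi.single_eq_of_ne hlt.ne']
    simpa using
      Submodule.add_mem _ hx' (Submodule.smul_mem _ (x N) (Submodule.subset_span ⟨N, rfl⟩))

instance {𝕜 : Type*} [NormedField 𝕜] [TopologicalSpace.SeparableSpace 𝕜] :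
    TopologicalSpace.SeparableSpace C₀(ℕ, 𝕜) := by
  rw [← TopologicalSpace.isSeparable_univ_iff, ← dense_setOf_eventually_eq_zero.closure_eq]
  refine ((countable_range fun i => single i (1 : 𝕜)).isSeparable.span (R := 𝕜)).closure.mono
    (closure_mono fun x hx => ?_)
  obtain ⟨N, hN⟩ := eventually_atTop.1 hx
  exact mem_span_range_single_of_forall_apply_eq_zero N x hN

end Sequence

end ZeroAtInftyContinuousMap

namespace WeightedShift

open ZeroAtInftyContinuousMap

variable {𝕜 : Type*} [NormedField 𝕜] {w : ℕ → 𝕜}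

def IsWeightedShift (w : ℕ → 𝕜) (T : C₀(ℕ, 𝕜) →L[𝕜] C₀(ℕ, 𝕜)) : Prop :=
  ∀ x n, T x n = w (n + 1) * x (n + 1)

def weightProd (w : ℕ → 𝕜) (n : ℕ) : 𝕜 :=
  ∏ i ∈ Finset.range n, w (i + 1)

@[simp]
theorem weightProd_zero : weightProd w 0 = 1 := by
  simp [weightProd]

theorem weightProd_succ (n : ℕ) : weightProd w (n + 1) = weightProd w n * w (n + 1) :=
  Finset.prod_range_succ _ n

theorem weightProd_ne_zero (hw : ∀ n, w n ≠ 0) (n : ℕ) : weightProd w n ≠ 0 :=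
  Finset.prod_ne_zero_iff.2 fun i _ => hw (i + 1)

theorem norm_weightProd_add_le {C : ℝ} (hC : ∀ n, ‖w n‖ ≤ C) (n j : ℕ) :
    ‖weightProd w (n + j)‖ ≤ ‖weightProd w n‖ * C ^ j := by
  induction j with
  | zero => simp
  | succ j ih =>
    rw [← add_assoc, weightProd_succ, norm_mul, pow_succ, ← mul_assoc]
    exact mul_le_mul ih (hC _) (norm_nonneg _)
      (mul_nonneg (norm_nonneg _) (pow_nonneg ((norm_nonneg _).trans (hC 0)) _))

theorem tendsto_norm_weightProd_of_tendsto_mul {C : ℝ} (hC : ∀ n, ‖w n‖ ≤ C) {k : ℕ}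
    (hk : k ≠ 0) (h : Tendsto (fun m => ‖weightProd w (k * m)‖) atTop atTop) :
    Tendsto (fun n => ‖weightProd w n‖) atTop atTop := by
  have hC1 : ∀ n, ‖w n‖ ≤ max C 1 := fun n => (hC n).trans (le_max_left _ _)
  have hpow : 0 < max C 1 ^ k := pow_pos (one_pos.trans_le (le_max_right _ _)) k
  -- the next multiple of `k` after `n` is at most `k` steps away
  have hle : ∀ n, ‖weightProd w (k * (n / k + 1))‖ / max C 1 ^ k ≤ ‖weightProd w n‖ := by
    intro n
    have hmul : k * (n / k + 1) = n + (k * (n / k + 1) - n) := by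
      have := Nat.div_add_mod n k; have := Nat.mod_lt n (Nat.pos_of_ne_zero hk)
      rw [mul_add]; omega
    rw [div_le_iff₀ hpow, hmul]
    refine (norm_weightProd_add_le hC1 n _).trans (mul_le_mul_of_nonneg_left ?_ (norm_nonneg _))
    refine pow_le_pow_right₀ (le_max_right _ _) ?_
    have := Nat.div_add_mod n k; have := Nat.mod_lt n (Nat.pos_of_ne_zero hk)
    rw [mul_add]; omega
  refine tendsto_atTop_mono hle (Tendsto.atTop_div_const hpow (h.comp ?_))
  exact (tendsto_add_atTop_nat 1).comp (Nat.tendsto_div_const_atTop hk)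

variable {T : C₀(ℕ, 𝕜) →L[𝕜] C₀(ℕ, 𝕜)}

theorem weightProd_mul_pow_apply (hT : IsWeightedShift w T) (x : C₀(ℕ, 𝕜)) (j n : ℕ) :
    weightProd w n * (T ^ j) x n = weightProd w (n + j) * x (n + j) := by
  induction j generalizing x with
  | zero => simp
  | succ j ih =>
    change weightProd w n * (T ^ j) (T x) n = _
    rw [ih, hT, ← add_assoc, weightProd_succ, mul_assoc]

theorem tendsto_norm_weightProd_mul_of_mapsTo (hT : IsWeightedShift w T) {Y : Set C₀(ℕ, 𝕜)}
    {y : C₀(ℕ, 𝕜)} (hy : y ∈ Y) {k : ℕ} (hk : k ≠ 0) (hYk : MapsTo (T ^ k) Y Y)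
    (hY : Y ⊆ {x | 2⁻¹ < ‖x 0‖}) :
    Tendsto (fun m => ‖weightProd w (k * m)‖) atTop atTop := by
  have horbit : ∀ m, 2⁻¹ < ‖weightProd w (k * m)‖ * ‖y (k * m)‖ := by
    intro m
    have hm : (T ^ (k * m)) y ∈ Y := by
      rw [pow_mul, FunLike.coe_pow_eq_iterate]
      exact hYk.iterate m hy
    have h0 := weightProd_mul_pow_apply hT y (k * m) 0
    rw [weightProd_zero, one_mul, zero_add] at h0
    rw [← norm_mul, ← h0]
    exact hY hm
  have hmul : Tendsto (fun m => k * m) atTop atTop :=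
    tendsto_atTop_mono (fun m => Nat.le_mul_of_pos_left m (Nat.pos_of_ne_zero hk)) tendsto_id
  exact tendsto_atTop_of_lt_mul (by norm_num)
    (tendsto_norm_zero.comp ((tendsto_apply_atTop y).comp hmul)) (fun _ => norm_nonneg _) horbit

theorem tendsto_norm_weightProd_of_denseSmallPeriodicSets {C : ℝ} (hC : ∀ n, ‖w n‖ ≤ C)
    (hT : IsWeightedShift w T) (h : ∀ U : Set C₀(ℕ, 𝕜), IsOpen U → U.Nonempty →
      ∃ Y : Set C₀(ℕ, 𝕜), Y.Nonempty ∧ IsClosed Y ∧ Y ⊆ U ∧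
        ∃ k : ℕ, 1 ≤ k ∧ (fun y => (T ^ k) y) '' Y ⊆ Y) :
    Tendsto (fun n => ‖weightProd w n‖) atTop atTop := by
  have hU : IsOpen {x : C₀(ℕ, 𝕜) | 2⁻¹ < ‖x 0‖} :=
    isOpen_lt continuous_const (continuous_eval_const 0).norm
  obtain ⟨Y, ⟨y, hy⟩, -, hYU, k, hk, hYk⟩ := h _ hU ⟨single 0 1, by norm_num [single_apply]⟩
  exact tendsto_norm_weightProd_of_tendsto_mul hC (by omega)
    (tendsto_norm_weightProd_mul_of_mapsTo hT hy (by omega) (mapsTo_iff_image_subset.2 hYk) hYU)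

theorem ext_of_weightProd_mul (hw : ∀ n, w n ≠ 0) {x y : C₀(ℕ, 𝕜)}
    (h : ∀ n, weightProd w n * x n = weightProd w n * y n) : x = y :=
  ext fun n => mul_left_cancel₀ (weightProd_ne_zero hw n) (h n)

theorem norm_apply_le_of_weightProd_mul_apply_eq (hw : ∀ n, w n ≠ 0) {y : C₀(ℕ, 𝕜)} {a : 𝕜}
    {M : ℝ} {n : ℕ} (hy : weightProd w n * y n = a) (ha : ‖a‖ ≤ M) :
    ‖y n‖ ≤ M / ‖weightProd w n‖ := by
  rw [← hy, norm_mul, mul_comm, ← le_div_iff₀ (norm_pos_iff.2 (weightProd_ne_zero hw n))] at ha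
  exact ha

theorem exists_weightProd_mul_apply_eq (hw : ∀ n, w n ≠ 0)
    (hP : Tendsto (fun n => ‖weightProd w n‖) atTop atTop) {u : ℕ → 𝕜} {M : ℝ}
    (hu : ∀ n, ‖u n‖ ≤ M) : ∃ y : C₀(ℕ, 𝕜), ∀ n, weightProd w n * y n = u n := by
  refine ⟨ofTendsto (fun n => u n / weightProd w n) ?_,
    fun n => mul_div_cancel₀ _ (weightProd_ne_zero hw n)⟩
  refine squeeze_zero_norm (a := fun n => M / ‖weightProd w n‖) (fun n => ?_)
    (tendsto_const_nhds.div_atTop hP)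
  rw [norm_div]
  exact div_le_div_of_nonneg_right (hu n) (norm_nonneg _)

theorem exists_norm_weightProd_mul_apply_le {x : C₀(ℕ, 𝕜)} (hx : ∀ᶠ n in atTop, x n = 0) :
    ∃ M, ∀ n, ‖weightProd w n * x n‖ ≤ M := by
  have hlim : Tendsto (fun n => ‖weightProd w n * x n‖) atTop (𝓝 0) :=
    tendsto_norm_zero.comp (tendsto_nhds_of_eventually_eq (hx.mono fun n hn => by simp [hn]))
  obtain ⟨M, hM⟩ := hlim.bddAbove_range
  exact ⟨M, fun n => hM ⟨n, rfl⟩⟩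

theorem dense_setOf_pow_apply_eq_self (hw : ∀ n, w n ≠ 0)
    (hP : Tendsto (fun n => ‖weightProd w n‖) atTop atTop) (hT : IsWeightedShift w T) :
    Dense {x : C₀(ℕ, 𝕜) | ∃ n, 1 ≤ n ∧ (T ^ n) x = x} := by
  refine dense_closure.1 (dense_setOf_eventually_eq_zero.mono fun x hx =>
    Metric.mem_closure_iff.2 fun ε hε => ?_)
  obtain ⟨N, hN⟩ := eventually_atTop.1 hx
  obtain ⟨M, hM⟩ := exists_norm_weightProd_mul_apply_le (w := w) hx
  obtain ⟨K, hK⟩ := eventually_atTop.1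
    ((tendsto_const_nhds.div_atTop hP).eventually (gt_mem_nhds (half_pos hε)))
  set k := max N K + 1
  -- repeat the first `k` coordinates of `x`, rescaled so that `T ^ k` fixes the result
  obtain ⟨y, hy⟩ := exists_weightProd_mul_apply_eq hw hP
    (u := fun n => weightProd w (n % k) * x (n % k)) fun n => hM _
  refine ⟨y, ⟨k, by omega, ext_of_weightProd_mul hw fun n => ?_⟩, ?_⟩
  · rw [weightProd_mul_pow_apply hT, hy, hy, Nat.add_mod_right]
  refine (dist_eq_norm x y ▸ norm_le_of_forall (half_pos hε).le fun n => ?_).trans_lt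
    (half_lt_self hε)
  by_cases hn : n < k
  · have hxy : x n = y n := by
      refine mul_left_cancel₀ (weightProd_ne_zero hw n) ?_
      rw [hy, Nat.mod_eq_of_lt hn]
    simp [hxy, (half_pos hε).le]
  · rw [coe_sub, Pi.sub_apply, hN n (by omega), zero_sub, norm_neg]
    exact (norm_apply_le_of_weightProd_mul_apply_eq hw (hy n) (hM _)).trans (hK n (by omega)).le

theorem pow_eq_zero_of_forall_apply_eq_zero (hw : ∀ n, w n ≠ 0) (hT : IsWeightedShift w T)
    {x : C₀(ℕ, 𝕜)} {N m : ℕ} (hx : ∀ n, N ≤ n → x n = 0) (hm : N ≤ m) : (T ^ m) x = 0 :=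
  ext_of_weightProd_mul hw fun n => by
    rw [weightProd_mul_pow_apply hT, hx _ (by omega)]
    simp

theorem eventually_exists_norm_lt_pow_apply_eq (hw : ∀ n, w n ≠ 0)
    (hP : Tendsto (fun n => ‖weightProd w n‖) atTop atTop) (hT : IsWeightedShift w T)
    {y : C₀(ℕ, 𝕜)} (hy : ∀ᶠ n in atTop, y n = 0) {δ : ℝ} (hδ : 0 < δ) :
    ∀ᶠ m in atTop, ∃ z : C₀(ℕ, 𝕜), ‖z‖ < δ ∧ (T ^ m) z = y := by
  obtain ⟨M, hM⟩ := exists_norm_weightProd_mul_apply_le (w := w) hy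
  have hM0 : 0 ≤ M := (norm_nonneg _).trans (hM 0)
  obtain ⟨K, hK⟩ := eventually_atTop.1
    ((tendsto_const_nhds.div_atTop hP).eventually (gt_mem_nhds (half_pos hδ)))
  refine eventually_atTop.2 ⟨K, fun m hm => ?_⟩
  -- `y` shifted forward by `m` places, rescaled so that `T ^ m` shifts it back
  have hu : ∀ n, ‖if m ≤ n then weightProd w (n - m) * y (n - m) else 0‖ ≤ M := fun n => by
    split_ifs
    exacts [hM _, by simpa using hM0]
  obtain ⟨z, hz⟩ := exists_weightProd_mul_apply_eq hw hP hu
  refine ⟨z, (norm_le_of_forall (half_pos hδ).le fun n => ?_).trans_lt (half_lt_self hδ),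
    ext_of_weightProd_mul hw fun n => ?_⟩
  · by_cases hn : m ≤ n
    · exact (norm_apply_le_of_weightProd_mul_apply_eq hw (hz n) (hu n)).trans (hK n (by omega)).le
    · have hz0 := norm_apply_le_of_weightProd_mul_apply_eq hw (hz n) (M := 0) (by simp [hn])
      rw [zero_div] at hz0
      exact hz0.trans (half_pos hδ).le
  · rw [weightProd_mul_pow_apply hT, hz]
    simp

theorem exists_inter_preimage_pow_nonempty (hw : ∀ n, w n ≠ 0)
    (hP : Tendsto (fun n => ‖weightProd w n‖) atTop atTop) (hT : IsWeightedShift w T)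
    {U V : Set C₀(ℕ, 𝕜)} (hU : IsOpen U) (hUne : U.Nonempty) (hV : IsOpen V) (hVne : V.Nonempty) :
    ∃ m, (U ∩ ⇑(T ^ m) ⁻¹' V).Nonempty := by
  obtain ⟨x, hx, hxU⟩ := dense_setOf_eventually_eq_zero.exists_mem_open hU hUne
  obtain ⟨y, hy, hyV⟩ := dense_setOf_eventually_eq_zero.exists_mem_open hV hVne
  obtain ⟨δ, hδ, hball⟩ := Metric.isOpen_iff.1 hU x hxU
  obtain ⟨N, hN⟩ := eventually_atTop.1 hx
  obtain ⟨m, hm, z, hz, hzy⟩ :=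
    ((eventually_ge_atTop N).and (eventually_exists_norm_lt_pow_apply_eq hw hP hT hy hδ)).exists
  refine ⟨m, x + z, hball (by simpa [dist_eq_norm] using hz), ?_⟩
  rw [mem_preimage, map_add, pow_eq_zero_of_forall_apply_eq_zero hw hT hN hm, hzy, zero_add]
  exact hyV

theorem exists_dense_orbit [CompleteSpace 𝕜] [TopologicalSpace.SeparableSpace 𝕜]
    (hw : ∀ n, w n ≠ 0) (hP : Tendsto (fun n => ‖weightProd w n‖) atTop atTop)
    (hT : IsWeightedShift w T) : ∃ x : C₀(ℕ, 𝕜), Dense (range fun n => (T ^ n) x) := by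
  simp_rw [FunLike.coe_pow_eq_iterate]
  refine exists_dense_orbit_of_transitive T.continuous fun U V hU hUne hV hVne => ?_
  simpa only [FunLike.coe_pow_eq_iterate] using
    exists_inter_preimage_pow_nonempty hw hP hT hU hUne hV hVne

end WeightedShift

open WeightedShift in
/-- Let `B_w : c₀ → c₀` be the weighted backward shift
`B_w((x_n)_n) = (w_{n+1} x_{n+1})_n` associated to a bounded sequence `(w_n)` of nonzero
scalars. Then `B_w` is chaotic if and only if it has dense small periodic sets.
(Here `c₀ = C₀(ℕ, ℂ)` is the Banach space of scalar sequences converging to `0` with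
the supremum norm.) -/
theorem weighted_shift_chaotic_iff_denseSmallPeriodicSets
    (w : ℕ → ℂ) (hw : ∀ n, w n ≠ 0) (hbd : ∃ C : ℝ, ∀ n, ‖w n‖ ≤ C)
    (T : C₀(ℕ, ℂ) →L[ℂ] C₀(ℕ, ℂ))
    (hT : ∀ (x : C₀(ℕ, ℂ)) (n : ℕ), T x n = w (n + 1) * x (n + 1)) :
    -- T is chaotic
    ((∃ x : C₀(ℕ, ℂ), Dense (Set.range fun n : ℕ => (T ^ n) x)) ∧
      Dense {x : C₀(ℕ, ℂ) | ∃ n : ℕ, 1 ≤ n ∧ (T ^ n) x = x}) ↔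
    -- T has dense small periodic sets
    (∀ U : Set C₀(ℕ, ℂ), IsOpen U → U.Nonempty →
      ∃ Y : Set C₀(ℕ, ℂ), Y.Nonempty ∧ IsClosed Y ∧ Y ⊆ U ∧
        ∃ k : ℕ, 1 ≤ k ∧ (fun y => (T ^ k) y) '' Y ⊆ Y) := by
  constructor
  · rintro ⟨-, hper⟩ U hU hUne
    obtain ⟨p, ⟨n, hn, hp⟩, hpU⟩ := hper.exists_mem_open hU hUne
    exact ⟨{p}, singleton_nonempty p, isClosed_singleton, singleton_subset_iff.2 hpU, n, hn,
      by rw [image_singleton, hp]⟩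
  · intro h
    obtain ⟨C, hC⟩ := hbd
    have hP := tendsto_norm_weightProd_of_denseSmallPeriodicSets hC hT h
    exact ⟨exists_dense_orbit hw hP hT, dense_setOf_pow_apply_eq_self hw hP hT⟩
end

section
/- Let T be an AP_b-hypercyclic continuous linear operator on a separable Fréchet space X. Then for every natural number p ≥ 1 the operator T^p is AP_b-hypercyclic; moreover, every AP_b-hypercyclic vector of T is an AP_b-hypercyclic vector of T^p. -/
open Set

theorem not_Ici_subset_closure_range_pow_mul {c q : ℝ} (hc : 0 ≤ c) (hq : 0 ≤ q) :
    ¬ Ici 0 ⊆ closure (range fun n : ℕ => c ^ n * q) := by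
  intro h
  rcases hq.eq_or_lt with rfl | hq
  · have hsub : closure (range fun n : ℕ => c ^ n * 0) ⊆ {0} :=
      closure_minimal (by rintro _ ⟨n, rfl⟩; simp) isClosed_singleton
    simpa using hsub (h (mem_Ici.2 zero_le_one))
  rcases le_or_gt c 1 with hc1 | hc1
  · have hsub : closure (range fun n : ℕ => c ^ n * q) ⊆ Iic q :=
      closure_minimal
        (by rintro _ ⟨n, rfl⟩; exact mul_le_of_le_one_left hq.le (pow_le_one₀ hc hc1)) isClosed_Iic
    have := hsub (h (mem_Ici.2 (by linarith : (0 : ℝ) ≤ q + 1)))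
    simp only [mem_Iic] at this
    linarith
  · have hsub : closure (range fun n : ℕ => c ^ n * q) ⊆ Ici q :=
      closure_minimal
        (by rintro _ ⟨n, rfl⟩; exact le_mul_of_one_le_left hq.le (one_le_pow₀ hc1.le)) isClosed_Ici
    have := hsub (h (mem_Ici.2 (by linarith : (0 : ℝ) ≤ q / 2)))
    simp only [mem_Ici] at this
    linarith

section OrbitObstructions

variable {E : Type*} [AddCommGroup E] [Module ℝ E] [TopologicalSpace E] (T : E →L[ℝ] E) (x : E)

theorem not_dense_orbit_of_comp_eq_mul {g : E → ℝ} (hg : Continuous g)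
    (hg_nonneg : ∀ z, 0 ≤ g z) (hg_range : Ici 0 ⊆ range g) {c : ℝ} (hc : 0 ≤ c)
    (hgT : ∀ z, g (T z) = c * g z) :
    ¬ Dense (range fun n : ℕ => (T ^ n) x) := by
  intro hx
  have horbit : ∀ n : ℕ, g ((T ^ n) x) = c ^ n * g x := by
    intro n
    induction n with
    | zero => simp
    | succ n ih => rw [pow_succ', mul_apply_eq_comp, hgT, ih, pow_succ', mul_assoc]
  apply not_Ici_subset_closure_range_pow_mul hc (hg_nonneg x)
  calc Ici 0 ⊆ range g := hg_range
    _ ⊆ closure (g '' range fun n : ℕ => (T ^ n) x) := hg.range_subset_closure_image_dense hx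
    _ = closure (range fun n : ℕ => c ^ n * g x) := by
      rw [← range_comp]
      simp only [Function.comp_def, horbit]

theorem not_dense_orbit_of_dual_eigen {f : StrongDual ℝ E} (hf : f ≠ 0) {t : ℝ}
    (hfT : ∀ z, f (T z) = t * f z) : ¬ Dense (range fun n : ℕ => (T ^ n) x) := by
  obtain ⟨w, hw⟩ : ∃ w, f w ≠ 0 := by simpa using DFunLike.ne_iff.1 hf
  refine not_dense_orbit_of_comp_eq_mul T x (g := fun z => f z ^ 2) (by fun_prop)
    (fun z => sq_nonneg _) (fun r hr => ⟨(√r / f w) • w, ?_⟩) (sq_nonneg t)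
    (fun z => by simp only [hfT]; ring)
  simp [hw, Real.sq_sqrt hr]

theorem not_dense_orbit_of_dual_quadratic {f : StrongDual ℝ E} (hf : f ≠ 0) {b c : ℝ}
    (hfT : ∀ z, f (T (T z)) + b * f (T z) + c * f z = 0) (hbc : b ^ 2 < 4 * c) :
    ¬ Dense (range fun n : ℕ => (T ^ n) x) := by
  by_cases hker : ∀ z, f z = 0 → f (T z) = 0
  · obtain ⟨w, hw⟩ : ∃ w, f w ≠ 0 := by simpa using DFunLike.ne_iff.1 hf
    refine not_dense_orbit_of_dual_eigen T x hf (t := f (T w) / f w) fun z => ?_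
    have := hker (z - (f z / f w) • w) (by simp [hw])
    simp only [map_sub, map_smul, smul_eq_mul] at this
    field_simp at this ⊢
    linarith
  push Not at hker
  obtain ⟨z₀, hz₀, hTz₀⟩ := hker
  -- `c u² + b u v + v²` is positive definite as `b² < 4 c`, and `T` multiplies it by `c`
  refine not_dense_orbit_of_comp_eq_mul T x
    (g := fun z => c * f z ^ 2 + b * f z * f (T z) + f (T z) ^ 2) (by fun_prop)
    (fun z => by nlinarith [sq_nonneg (2 * f (T z) + b * f z), sq_nonneg (f z)])
    (fun r hr => ⟨(√r / f (T z₀)) • z₀, ?_⟩) (c := c) (by nlinarith [sq_nonneg b])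
    fun z => ?_
  · simp [hz₀, hTz₀, Real.sq_sqrt hr]
  · have hTT : f (T (T z)) = -(b * f (T z)) - c * f z := by linarith [hfT z]
    simp only [hTT]
    ring

end OrbitObstructions

section ResidueOrbit

variable {E : Type*} [AddCommGroup E] [Module ℝ E] [TopologicalSpace E]
  (T : E →L[ℝ] E) (p : ℕ)

def residueOrbit (z : E) (r : ZMod p) : Set E :=
  (fun n : ℕ => (T ^ n) z) '' {n | (n : ZMod p) = r}

variable {T p}

theorem pow_apply_mem_closure_residueOrbit {z w : E} {r : ZMod p}
    (hw : w ∈ closure (residueOrbit T p z r)) (i : ℕ) :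
    (T ^ i) w ∈ closure (residueOrbit T p z (r + i)) := by
  have hmaps : MapsTo (T ^ i) (residueOrbit T p z r) (residueOrbit T p z (r + i)) := by
    rintro _ ⟨n, rfl, rfl⟩
    exact ⟨i + n, by simp [add_comm], by simp only [pow_add, mul_apply_eq_comp]⟩
  exact hmaps.closure (T ^ i).continuous hw

theorem closure_residueOrbit_subset {z w : E} {r : ZMod p}
    (hw : w ∈ closure (residueOrbit T p z r)) (s : ZMod p) :
    closure (residueOrbit T p w s) ⊆ closure (residueOrbit T p z (r + s)) :=
  closure_minimal (by rintro _ ⟨n, rfl, rfl⟩; exact pow_apply_mem_closure_residueOrbit hw n)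
    isClosed_closure

theorem exists_mem_closure_residueOrbit [NeZero p] {z : E}
    (hz : Dense (range fun n : ℕ => (T ^ n) z)) (w : E) :
    ∃ r : ZMod p, w ∈ closure (residueOrbit T p z r) := by
  have hcover :
      range (fun n : ℕ => (T ^ n) z) ⊆ ⋃ r : ZMod p, closure (residueOrbit T p z r) := by
    rintro _ ⟨n, rfl⟩
    exact mem_iUnion.2 ⟨n, subset_closure ⟨n, rfl, rfl⟩⟩
  have hclosed : IsClosed (⋃ r : ZMod p, closure (residueOrbit T p z r)) :=
    isClosed_iUnion_of_finite fun _ => isClosed_closure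
  have hw : w ∈ ⋃ r : ZMod p, closure (residueOrbit T p z r) := by
    rw [← hclosed.closure_eq, (hz.mono hcover).closure_eq]
    exact mem_univ w
  exact mem_iUnion.1 hw

variable (T p) in
def returnSubmonoid (x : E) : AddSubmonoid (ZMod p) where
  carrier := {r | x ∈ closure (residueOrbit T p x r)}
  zero_mem' := subset_closure ⟨0, by simp, by simp⟩
  add_mem' {r} _ hr hs := closure_residueOrbit_subset hr _ hs

theorem exists_add_mem_returnSubmonoid [NeZero p] {x z : E}
    (hz : Dense (range fun n : ℕ => (T ^ n) z)) :
    ∃ t : ZMod p, ∀ r, z ∈ closure (residueOrbit T p x r) →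
      r + t ∈ returnSubmonoid T p x := by
  obtain ⟨t, ht⟩ := exists_mem_closure_residueOrbit (p := p) hz x
  exact ⟨t, fun r hr => closure_residueOrbit_subset hr t ht⟩

end ResidueOrbit

theorem AddSubmonoid.neg_mem_of_finite {G : Type*} [AddGroup G] [Finite G] (S : AddSubmonoid G)
    {a : G} (ha : a ∈ S) : -a ∈ S := by
  have hneg : -a = (Nat.card G - 1) • a := by
    rw [eq_comm, ← add_eq_zero_iff_eq_neg, ← succ_nsmul, Nat.sub_add_cancel Nat.card_pos,
      card_nsmul_eq_zero']
  exact hneg ▸ S.nsmul_mem ha _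

section PolynomialOrbit

open Polynomial

theorem Polynomial.discrim_lt_zero_of_irreducible {q : ℝ[X]} (hq : Irreducible q)
    (h₂ : q.coeff 2 ≠ 0) : discrim (q.coeff 2) (q.coeff 1) (q.coeff 0) < 0 := by
  by_contra! h
  obtain ⟨r, hr⟩ := exists_quadratic_eq_zero h₂ ⟨_, (Real.mul_self_sqrt h).symm⟩
  have hroot : q.IsRoot r := by
    rw [IsRoot, eq_quadratic_of_degree_le_two hq.degree_le_two]
    simp only [eval_add, eval_mul, eval_C, eval_pow, eval_X]
    linarith
  have hdeg := degree_eq_one_of_irreducible_of_root hq hroot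
  exact h₂ (coeff_eq_zero_of_degree_lt (by rw [hdeg]; norm_num))

theorem smul_add_smul_X_pow_ne_zero {R : Type*} [Semiring R] {q : R[X]} (hq : q ≠ 0) {n : ℕ}
    (hn : q.natDegree < n) {a b : R} (hab : a + b = 1) : a • q + b • (X ^ n : R[X]) ≠ 0 := by
  intro h
  have hb : b = 0 := by
    simpa [coeff_eq_zero_of_natDegree_lt hn] using congrArg (coeff · n) h
  rw [hb, add_zero] at hab
  rw [hb, hab, zero_smul, add_zero, one_smul] at h
  exact hq h

variable {E : Type*} [AddCommGroup E] [Module ℝ E] [TopologicalSpace E] [IsTopologicalAddGroup E]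
  [ContinuousSMul ℝ E] (T : E →L[ℝ] E) (x : E)

def polynomialOrbit : Set E :=
  {y | ∃ q : ℝ[X], q ≠ 0 ∧ aeval T q x = y}

theorem segment_subset_polynomialOrbit {q₁ q₂ : ℝ[X]}
    (h : ∀ a b : ℝ, a + b = 1 → a • q₁ + b • q₂ ≠ 0) :
    segment ℝ (aeval T q₁ x) (aeval T q₂ x) ⊆ polynomialOrbit T x := by
  rintro _ ⟨a, b, -, -, hab, rfl⟩
  exact ⟨a • q₁ + b • q₂, h a b hab, by simp⟩

theorem isPreconnected_polynomialOrbit : IsPreconnected (polynomialOrbit T x) := by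
  refine isPreconnected_of_forall x ?_
  rintro _ ⟨q, hq, rfl⟩
  -- both `x` and `q(T) x` are joined by a segment to `T^(d+1) x`, `d = deg q`
  have hsegment : ∀ q' : ℝ[X], q' ≠ 0 → q'.natDegree ≤ q.natDegree →
      segment ℝ (aeval T q' x) (aeval T (X ^ (q.natDegree + 1)) x) ⊆ polynomialOrbit T x :=
    fun q' hq' hdeg => segment_subset_polynomialOrbit T x fun _ _ hab =>
      smul_add_smul_X_pow_ne_zero hq' (Nat.lt_succ_of_le hdeg) hab
  have h₁ := hsegment 1 one_ne_zero (by simp)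
  have h₂ := hsegment q hq le_rfl
  rw [map_one, one_apply_eq_self] at h₁
  refine ⟨_, union_subset h₁ h₂, .inl (left_mem_segment ℝ _ _), .inr (left_mem_segment ℝ _ _), ?_⟩
  exact (convex_segment _ _).isPreconnected.union _ (right_mem_segment ℝ _ _)
    (right_mem_segment ℝ _ _) (convex_segment _ _).isPreconnected

end PolynomialOrbit

section LocallyConvex

open Polynomial

variable {E : Type*} [AddCommGroup E] [Module ℝ E] [TopologicalSpace E] [IsTopologicalAddGroup E]
  [ContinuousSMul ℝ E] [LocallyConvexSpace ℝ E]

theorem Submodule.exists_dual_ne_zero_of_not_dense {S : Submodule ℝ E}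
    (hS : ¬ Dense (S : Set E)) :
    ∃ f : StrongDual ℝ E, f ≠ 0 ∧ ∀ y ∈ S, f y = 0 := by
  obtain ⟨v, hv⟩ : ∃ v, v ∉ S.topologicalClosure := by
    by_contra! h
    exact hS (dense_iff_closure_eq.2 (eq_univ_of_forall h))
  obtain ⟨f, u, hfv, hfu⟩ :=
    geometric_hahn_banach_point_closed S.topologicalClosure.convex S.isClosed_topologicalClosure hv
  -- a functional bounded below on a subspace vanishes on it
  have hzero : ∀ y ∈ S.topologicalClosure, f y = 0 := by
    intro y hy
    by_contra hne
    have := hfu (((u - 1) / f y) • y) (Submodule.smul_mem _ _ hy)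
    rw [map_smul, smul_eq_mul, div_mul_cancel₀ _ hne] at this
    linarith
  refine ⟨f, fun hf => ?_, fun y hy => hzero y (S.le_topologicalClosure hy)⟩
  have := hfu 0 (Submodule.zero_mem _)
  simp only [hf, zero_apply] at hfv this
  linarith

variable (T : E →L[ℝ] E) {x : E}

theorem denseRange_aeval_of_irreducible (hx : Dense (range fun n : ℕ => (T ^ n) x)) {q : ℝ[X]}
    (hq : Irreducible q) : DenseRange (aeval T q) := by
  by_contra hdense
  obtain ⟨f, hf, hfq⟩ :=
    (LinearMap.range (aeval T q : E →ₗ[ℝ] E)).exists_dual_ne_zero_of_not_dense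
      (by rwa [LinearMap.coe_range, ContinuousLinearMap.coe_coe])
  have hq₂ := eq_quadratic_of_degree_le_two hq.degree_le_two
  set a := q.coeff 2
  set b := q.coeff 1
  set c := q.coeff 0
  have hrel : ∀ z, a * f (T (T z)) + b * f (T z) + c * f z = 0 := fun z => by
    have := hfq _ (LinearMap.mem_range_self _ z)
    rw [hq₂] at this
    simpa [Algebra.smul_def, sq] using this
  rcases eq_or_ne a 0 with ha | ha
  · have hb : b ≠ 0 := by
      rintro hb
      have := hq.natDegree_pos
      rw [hq₂, ha, hb] at this
      simp at this
    refine not_dense_orbit_of_dual_eigen T x hf (t := -c / b) (fun z => ?_) hx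
    have := hrel z
    rw [ha] at this
    field_simp
    linarith
  · have hdisc := discrim_lt_zero_of_irreducible hq ha
    refine not_dense_orbit_of_dual_quadratic T x hf (b := b / a) (c := c / a) (fun z => ?_) ?_ hx
    · field_simp
      linarith [hrel z]
    · have hdiv : (b / a) ^ 2 - 4 * (c / a) = discrim a b c / a ^ 2 := by
        rw [discrim]
        field_simp
      linarith [div_neg_of_neg_of_pos hdisc (by positivity : 0 < a ^ 2)]

theorem denseRange_aeval (hx : Dense (range fun n : ℕ => (T ^ n) x)) {q : ℝ[X]}
    (hq : q ≠ 0) : DenseRange (aeval T q) := by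
  induction q using WfDvdMonoid.induction_on_irreducible with
  | zero => exact absurd rfl hq
  | unit u hu =>
    obtain ⟨v, hv⟩ := (hu.map (aeval T)).exists_right_inv
    exact Function.Surjective.denseRange fun y => ⟨v y, by rw [← mul_apply_eq_comp, hv]; rfl⟩
  | mul a i ha hi ih =>
    rw [map_mul, FunLike.coe_mul_eq_comp]
    exact (denseRange_aeval_of_irreducible T hx hi).comp (ih ha) (aeval T i).continuous

theorem dense_orbit_aeval_apply (hx : Dense (range fun n : ℕ => (T ^ n) x)) {q : ℝ[X]}
    (hq : q ≠ 0) : Dense (range fun n : ℕ => (T ^ n) (aeval T q x)) := by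
  have hcomm : ∀ n : ℕ, (T ^ n) (aeval T q x) = aeval T q ((T ^ n) x) := fun n => by
    rw [← mul_apply_eq_comp, ← mul_apply_eq_comp, ← aeval_X_pow (R := ℝ) (x := T),
      ← map_mul, ← map_mul, (commute_X_pow q n).eq]
  simpa only [← range_comp, Function.comp_def, hcomm] using
    (denseRange_aeval T hx hq).dense_image (aeval T q).continuous hx

variable {p : ℕ} [NeZero p]

theorem returnSubmonoid_eq_top (hx : Dense (range fun n : ℕ => (T ^ n) x)) :
    returnSubmonoid T p x = ⊤ := by
  set J := returnSubmonoid T p x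
  by_contra hJ
  obtain ⟨s₀, hs₀⟩ : ∃ s, s ∉ J := by simpa [AddSubmonoid.eq_top_iff'] using hJ
  set A := ⋃ r ∈ (J : Set (ZMod p)), closure (residueOrbit T p x r)
  set B := ⋃ r ∈ (J : Set (ZMod p))ᶜ, closure (residueOrbit T p x r)
  have hcover : polynomialOrbit T x ⊆ A ∪ B := fun z _ => by
    obtain ⟨r, hr⟩ := exists_mem_closure_residueOrbit (p := p) hx z
    by_cases hrJ : r ∈ J
    · exact .inl (mem_biUnion (x := r) hrJ hr)
    · exact .inr (mem_biUnion (x := r) hrJ hr)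
  have hxA : x ∈ A := mem_biUnion (x := 0) J.zero_mem J.zero_mem
  have hB : (T ^ s₀.val) x ∈ B :=
    mem_biUnion (x := s₀) hs₀ (subset_closure ⟨s₀.val, ZMod.natCast_zmod_val s₀, rfl⟩)
  obtain ⟨_, ⟨q, hq, rfl⟩, hzA, hzB⟩ := isPreconnected_closed_iff.1
    (isPreconnected_polynomialOrbit T x) A B
    ((toFinite _).isClosed_biUnion fun _ _ => isClosed_closure)
    ((toFinite _).isClosed_biUnion fun _ _ => isClosed_closure) hcover
    ⟨x, ⟨1, one_ne_zero, by simp⟩, hxA⟩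
    ⟨_, ⟨X ^ s₀.val, pow_ne_zero _ X_ne_zero, by simp⟩, hB⟩
  obtain ⟨r, hr, hzr⟩ := mem_iUnion₂.1 hzA
  obtain ⟨s, hs, hzs⟩ := mem_iUnion₂.1 hzB
  obtain ⟨t, ht⟩ :=
    exists_add_mem_returnSubmonoid (x := x) (p := p) (dense_orbit_aeval_apply T hx hq)
  apply hs
  have := J.add_mem (J.add_mem (ht s hzs) (J.neg_mem_of_finite (ht r hzr))) hr
  rwa [show s + t + -(r + t) + r = s by abel] at this

variable (p) in
theorem dense_orbit_pow (hx : Dense (range fun n : ℕ => (T ^ n) x)) :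
    Dense (range fun n : ℕ => ((T ^ p) ^ n) x) := by
  intro w
  obtain ⟨t, ht⟩ := exists_mem_closure_residueOrbit (p := p) hx w
  have hneg : -t ∈ returnSubmonoid T p x :=
    returnSubmonoid_eq_top (p := p) T hx ▸ AddSubmonoid.mem_top _
  have h0 := closure_residueOrbit_subset hneg t ht
  rw [neg_add_cancel] at h0
  refine closure_mono ?_ h0
  rintro _ ⟨n, hn, rfl⟩
  obtain ⟨m, rfl⟩ := (ZMod.natCast_eq_zero_iff n p).1 hn
  exact ⟨m, by simp only [pow_mul]⟩

end LocallyConvex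

section APb

variable {E : Type*} [AddCommGroup E] [Module ℝ E] [TopologicalSpace E]
  {T : E →L[ℝ] E} {x : E}

theorem dense_orbit_of_forall_APb
    (hx : ∀ U : Set E, IsOpen U → U.Nonempty → APb {n : ℕ | (T ^ n) x ∈ U}) :
    Dense (range fun n : ℕ => (T ^ n) x) := by
  refine dense_iff_inter_open.2 fun U hU hne => ?_
  obtain ⟨_, -, hprog⟩ := hx U hU hne
  obtain ⟨a, ha⟩ := hprog 0
  exact ⟨_, by simpa using ha 0 le_rfl, a, rfl⟩

theorem APb_setOf_pow_pow_apply_mem {p : ℕ} (hx : Dense (range fun n : ℕ => ((T ^ p) ^ n) x))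
    {U : Set E} (hU : IsOpen U) (hTU : APb {n : ℕ | (T ^ n) x ∈ U}) :
    APb {n : ℕ | ((T ^ p) ^ n) x ∈ U} := by
  obtain ⟨k, hk, hprog⟩ := hTU
  refine ⟨k, hk, fun m => ?_⟩
  set V := ⋂ j ∈ Iic m, ((T ^ p) ^ (j * k)) ⁻¹' U
  have hV : IsOpen V := (finite_Iic m).isOpen_biInter fun j _ => hU.preimage (by fun_prop)
  -- a progression of length `p m` in `N_T(x, U)` puts its first point in `V`
  have hVne : V.Nonempty := by
    obtain ⟨a, ha⟩ := hprog (p * m)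
    refine ⟨(T ^ a) x, mem_iInter₂.2 fun j hj => ?_⟩
    have hexp : p * (j * k) + a = a + p * j * k := by ring
    rw [mem_preimage, ← pow_mul, ← mul_apply_eq_comp, ← pow_add, hexp]
    exact ha (p * j) (Nat.mul_le_mul_left p hj)
  obtain ⟨_, ⟨n, rfl⟩, hn⟩ := hx.exists_mem_open hV hVne
  refine ⟨n, fun j hj => ?_⟩
  have := mem_iInter₂.1 hn j hj
  rwa [mem_preimage, ← mul_apply_eq_comp, ← pow_add, add_comm] at this

end APb

theorem APb_hypercyclic_powers_general
    {X : Type*} [AddCommGroup X] [Module ℝ X] [UniformSpace X] [IsUniformAddGroup X]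
    [ContinuousSMul ℝ X] [LocallyConvexSpace ℝ X]
    (T : X →L[ℝ] X)
    (hAPb : ∃ x : X, ∀ U : Set X, IsOpen U → U.Nonempty → APb {n : ℕ | (T ^ n) x ∈ U})
    (p : ℕ) (hp : 1 ≤ p) :
    (∃ x : X, ∀ U : Set X, IsOpen U → U.Nonempty →
      APb {n : ℕ | ((T ^ p) ^ n) x ∈ U}) ∧
    (∀ x : X, (∀ U : Set X, IsOpen U → U.Nonempty → APb {n : ℕ | (T ^ n) x ∈ U}) →
      ∀ U : Set X, IsOpen U → U.Nonempty → APb {n : ℕ | ((T ^ p) ^ n) x ∈ U}) := by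
  have : NeZero p := ⟨by omega⟩
  have hpow (x : X)
      (hx : ∀ U : Set X, IsOpen U → U.Nonempty → APb {n : ℕ | (T ^ n) x ∈ U})
      (U : Set X) (hU : IsOpen U) (hne : U.Nonempty) : APb {n : ℕ | ((T ^ p) ^ n) x ∈ U} :=
    APb_setOf_pow_pow_apply_mem (dense_orbit_pow T p (dense_orbit_of_forall_APb hx)) hU
      (hx U hU hne)
  obtain ⟨x, hx⟩ := hAPb
  exact ⟨⟨x, hpow x hx⟩, hpow⟩

/-- **Ansari-type property.** Let `T` be an `AP_b`-hypercyclic continuous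
linear operator on a separable Fréchet space `X`. Then for every `p ≥ 1` the power
`T^p` is `AP_b`-hypercyclic; moreover every `AP_b`-hypercyclic vector of `T` is an
`AP_b`-hypercyclic vector of `T^p`. -/
theorem APb_hypercyclic_powers
    {X : Type*} [AddCommGroup X] [Module ℝ X] [UniformSpace X] [IsUniformAddGroup X]
    [ContinuousSMul ℝ X] [LocallyConvexSpace ℝ X] [CompleteSpace X]
    [Filter.IsCountablyGenerated (uniformity X)] [T2Space X]
    [TopologicalSpace.SeparableSpace X]
    (T : X →L[ℝ] X)
    (hAPb : ∃ x : X, ∀ U : Set X, IsOpen U → U.Nonempty → APb {n : ℕ | (T ^ n) x ∈ U})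
    (p : ℕ) (hp : 1 ≤ p) :
    (∃ x : X, ∀ U : Set X, IsOpen U → U.Nonempty →
      APb {n : ℕ | ((T ^ p) ^ n) x ∈ U}) ∧
    (∀ x : X, (∀ U : Set X, IsOpen U → U.Nonempty → APb {n : ℕ | (T ^ n) x ∈ U}) →
      ∀ U : Set X, IsOpen U → U.Nonempty → APb {n : ℕ | ((T ^ p) ^ n) x ∈ U}) :=
  APb_hypercyclic_powers_general T hAPb p hp
end

section
/- Let X be a complex Banach space, S a bounded linear operator on X, x* ∈ X* a nonzero continuous linear functional, and U = {y ∈ X : Re(x*(y)) > 0 and Re(x*(S(y))) < 0}. Suppose there exists x ∈ U such that liminf_{k→∞} #(N_S(x,U) ∩ [0,k]) / (k+1) > 0, where N_S(x,U) = {n ∈ ℕ : S^n(x) ∈ U}. Then S − I is not quasinilpotent, i.e. the spectral radius of S − I is nonzero. -/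
/-!
Write `Q = S - 1` and `d k = Re f (Q ^ k x)`. If `Q` is quasinilpotent then `d k = O(ρ ^ k)` for
every `ρ > 0`, so the Newton series `G z = ∑ d k * (z choose k)` is an entire function of
arbitrarily small exponential type; it is real on `ℝ` and `G n = Re f (S ^ n x)` by the binomial
theorem for `S = Q + 1`. Each return time `n` of `x` to `U` is a sign change of `G` from `n` to
`n + 1`, hence gives a real zero in `(n, n + 1)`. Return times of positive lower density `δ` thus
give about `δ R` zeros in the disc of radius `R`, and dividing them out shows that `G` has type
at least `δ log 3 / 4`, a contradiction.
-/

open Filter Finset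

theorem exists_norm_pow_le_mul_pow_of_spectralRadius_eq_zero {A : Type*} [NormedRing A]
    [NormedAlgebra ℂ A] [CompleteSpace A] {a : A} (ha : spectralRadius ℂ a = 0)
    {ρ : ℝ} (hρ : 0 < ρ) : ∃ C, ∀ n, ‖a ^ n‖ ≤ C * ρ ^ n := by
  have hlim := spectrum.pow_norm_pow_one_div_tendsto_nhds_spectralRadius a
  rw [ha] at hlim
  have hev : ∀ᶠ n : ℕ in atTop, ‖a ^ n‖ ≤ ρ ^ n := by
    filter_upwards [hlim.eventually_lt_const (ENNReal.ofReal_pos.2 hρ),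
      eventually_ge_atTop 1] with n hn hn1
    rw [one_div, ENNReal.ofReal_lt_ofReal_iff hρ, Real.rpow_inv_lt_iff_of_pos (norm_nonneg _)
      hρ.le (by positivity), Real.rpow_natCast] at hn
    exact hn.le
  have hO : (fun n => ‖a ^ n‖) =O[atTop] (fun n => ρ ^ n) :=
    Asymptotics.IsBigO.of_bound 1 (by simpa [abs_of_pos hρ] using hev)
  simpa [abs_of_pos hρ] using
    (Asymptotics.isBigO_nat_atTop_iff fun n h => absurd h (pow_ne_zero n hρ.ne')).1 hO

theorem exists_pos_eventually_lt_of_pos_liminf {α : Type*} {l : Filter α} {u : α → ℝ}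
    (hu : ∀ a, 0 ≤ u a) (h : 0 < liminf u l) : ∃ δ > 0, ∀ᶠ a in l, δ < u a :=
  ⟨liminf u l / 2, half_pos h,
    eventually_lt_of_lt_liminf (half_lt_self h) ⟨0, eventually_map.2 (Eventually.of_forall hu)⟩⟩

theorem ncard_le_card_filter_range {P Q : ℕ → Prop} [DecidablePred Q] (h : ∀ n, P n → Q n)
    (k : ℕ) : {n | n ≤ k ∧ P n}.ncard ≤ #{n ∈ range (k + 1) | Q n} := by
  rw [← Set.ncard_coe_finset]
  refine Set.ncard_le_ncard (fun n hn => ?_) (finite_toSet _)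
  simpa [Nat.lt_succ_iff, hn.1] using h n hn.2

theorem Ring.choose_eq_prod_div {R : Type*} [Field R] [CharZero R] (z : R) (k : ℕ) :
    Ring.choose z k = (∏ j ∈ range k, (z - j)) / k.factorial := by
  rw [Ring.choose_eq_smul, ← Polynomial.aeval_eq_smeval, Polynomial.aeval_def,
    Polynomial.eval₂_eq_eval_map, descPochhammer_map, descPochhammer_eval_eq_prod_range,
    smul_eq_mul, div_eq_inv_mul]

theorem Ring.norm_choose_le_exp_mul_pow (z : ℂ) (k : ℕ) {c : ℝ} (hc : 0 < c) :
    ‖Ring.choose z k‖ ≤ Real.exp (c * ‖z‖) * (Real.exp c / c) ^ k := by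
  have hprod : ‖∏ j ∈ range k, (z - j)‖ ≤ (‖z‖ + k) ^ k := by
    calc ‖∏ j ∈ range k, (z - j)‖ = ∏ j ∈ range k, ‖z - j‖ := norm_prod _ _
      _ ≤ ∏ _j ∈ range k, (‖z‖ + k) := by
        gcongr with j hj
        calc ‖z - j‖ ≤ ‖z‖ + j := by simpa using norm_sub_le z j
          _ ≤ ‖z‖ + k := by gcongr; exact_mod_cast (mem_range.1 hj).le
      _ = (‖z‖ + k) ^ k := by rw [prod_const, card_range]
  have hexp := Real.pow_div_factorial_le_exp (x := c * (‖z‖ + k)) (by positivity) k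
  calc ‖Ring.choose z k‖ ≤ (‖z‖ + k) ^ k / k.factorial := by
        rw [Ring.choose_eq_prod_div, norm_div, Complex.norm_natCast]
        gcongr
    _ = (c * (‖z‖ + k)) ^ k / k.factorial / c ^ k := by
        rw [mul_pow]; field_simp
    _ ≤ Real.exp (c * (‖z‖ + k)) / c ^ k := by gcongr
    _ = Real.exp (c * ‖z‖) * (Real.exp c / c) ^ k := by
        rw [mul_add, Real.exp_add, div_pow, ← Real.exp_nat_mul, mul_comm c k]; ring

noncomputable def newtonSeries (d : ℕ → ℝ) (z : ℂ) : ℂ :=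
  ∑' k, d k * Ring.choose z k

section NewtonSeries

variable (d : ℕ → ℝ)

theorem newtonSeries_natCast (n : ℕ) : newtonSeries d n = ∑ k ∈ range (n + 1), (n.choose k * d k : ℝ) := by
  rw [newtonSeries, tsum_eq_sum (s := range (n + 1))]
  · push_cast
    refine sum_congr rfl fun k _ => ?_
    rw [Ring.choose_natCast, mul_comm]
  · intro k hk
    rw [Ring.choose_natCast, Nat.choose_eq_zero_of_lt (by simpa using hk), Nat.cast_zero, mul_zero]

theorem newtonSeries_ofReal (t : ℝ) : newtonSeries d t = ((∑' k, d k * Ring.choose t k : ℝ) : ℂ) := by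
  rw [Complex.ofReal_tsum, newtonSeries]
  simp_rw [Complex.ofReal_mul, ← Complex.ofRealHom_eq_coe, Ring.map_choose]

theorem im_newtonSeries_ofReal (t : ℝ) : (newtonSeries d t).im = 0 := by
  rw [newtonSeries_ofReal, Complex.ofReal_im]

variable {d} {A ρ c : ℝ}

theorem norm_mul_choose_le (hc : 0 < c) (hd : ∀ k, |d k| ≤ A * ρ ^ k) {z : ℂ} {R : ℝ} (hz : ‖z‖ ≤ R)
    (k : ℕ) : ‖d k * Ring.choose z k‖ ≤ A * Real.exp (c * R) * (ρ * Real.exp c / c) ^ k := by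
  rw [norm_mul, Complex.norm_real, Real.norm_eq_abs]
  calc |d k| * ‖Ring.choose z k‖ ≤ A * ρ ^ k * (Real.exp (c * ‖z‖) * (Real.exp c / c) ^ k) :=
        mul_le_mul (hd k) (Ring.norm_choose_le_exp_mul_pow z k hc) (norm_nonneg _)
          ((abs_nonneg _).trans (hd k))
    _ ≤ A * ρ ^ k * (Real.exp (c * R) * (Real.exp c / c) ^ k) := by
        gcongr
        exact (abs_nonneg _).trans (hd k)
    _ = A * Real.exp (c * R) * (ρ * Real.exp c / c) ^ k := by ring

variable (hρ : 0 ≤ ρ) (hc : 0 < c) (hq : ρ * Real.exp c / c < 1) (hd : ∀ k, |d k| ≤ A * ρ ^ k)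
include hρ hc hq hd

theorem differentiable_newtonSeries : Differentiable ℂ (newtonSeries d) := by
  intro z
  have hball : Metric.ball (0 : ℂ) (‖z‖ + 1) ∈ nhds z := Metric.isOpen_ball.mem_nhds (by simp)
  refine (Complex.differentiableOn_tsum_of_summable_norm
    ((summable_geometric_of_lt_one (by positivity) hq).mul_left (A * Real.exp (c * (‖z‖ + 1))))
    (fun k => ?_) Metric.isOpen_ball
    (fun k w hw => norm_mul_choose_le hc hd (mem_ball_zero_iff.1 hw).le k)).differentiableAt hball
  simp_rw [Ring.choose_eq_prod_div]
  fun_prop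

theorem norm_newtonSeries_le (z : ℂ) :
    ‖newtonSeries d z‖ ≤ A / (1 - ρ * Real.exp c / c) * Real.exp (c * ‖z‖) := by
  have hgeom := (summable_geometric_of_lt_one (by positivity) hq).mul_left (A * Real.exp (c * ‖z‖))
  have hbound := norm_mul_choose_le hc hd (le_refl ‖z‖)
  have hsummable := hgeom.of_nonneg_of_le (fun _ => norm_nonneg _) hbound
  calc ‖newtonSeries d z‖ ≤ ∑' k, ‖d k * Ring.choose z k‖ := norm_tsum_le_tsum_norm hsummable
    _ ≤ ∑' k, A * Real.exp (c * ‖z‖) * (ρ * Real.exp c / c) ^ k :=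
        hsummable.tsum_le_tsum hbound hgeom
    _ = A / (1 - ρ * Real.exp c / c) * Real.exp (c * ‖z‖) := by
        rw [tsum_mul_left, tsum_geometric_of_lt_one (by positivity) hq]; ring

end NewtonSeries

section Orbit

variable {E : Type*} [NormedAddCommGroup E] [NormedSpace ℂ E] (S : E →L[ℂ] E) (f : E →L[ℂ] ℂ)
  (x : E)

noncomputable def orbitDiff (k : ℕ) : ℝ :=
  (f (((S - 1) ^ k) x)).re

theorem newtonSeries_orbitDiff_natCast (n : ℕ) :
    newtonSeries (orbitDiff S f x) n = (f ((S ^ n) x)).re := by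
  have hS : S ^ n = (S - 1 + 1) ^ n := by rw [sub_add_cancel]
  rw [newtonSeries_natCast, hS, (Commute.one_right (S - 1)).add_pow, _root_.sum_apply, map_sum,
    Complex.re_sum]
  refine congrArg _ (sum_congr rfl fun k _ => ?_)
  rw [one_pow, mul_one, mul_apply_eq_comp, ContinuousLinearMap.natCast_apply, map_nsmul,
    map_nsmul, Complex.re_nsmul, nsmul_eq_mul, orbitDiff]

theorem newtonSeries_orbitDiff_zero : newtonSeries (orbitDiff S f x) 0 = (f x).re := by
  simpa using newtonSeries_orbitDiff_natCast S f x 0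

theorem re_newtonSeries_orbitDiff_pos_and_neg {n : ℕ} (hpos : 0 < (f ((S ^ n) x)).re)
    (hneg : (f (S ((S ^ n) x))).re < 0) :
    0 < (newtonSeries (orbitDiff S f x) n).re ∧
      (newtonSeries (orbitDiff S f x) (n + 1 : ℕ)).re < 0 := by
  rw [newtonSeries_orbitDiff_natCast, newtonSeries_orbitDiff_natCast, Complex.ofReal_re,
    Complex.ofReal_re, pow_succ', mul_apply_eq_comp]
  exact ⟨hpos, hneg⟩

theorem exists_abs_orbitDiff_le_of_spectralRadius_eq_zero [CompleteSpace E]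
    (hS : spectralRadius ℂ (S - 1) = 0) {ρ : ℝ} (hρ : 0 < ρ) :
    ∃ A, ∀ k, |orbitDiff S f x k| ≤ A * ρ ^ k := by
  obtain ⟨C, hC⟩ := exists_norm_pow_le_mul_pow_of_spectralRadius_eq_zero hS hρ
  refine ⟨‖f‖ * ‖x‖ * C, fun k => ?_⟩
  calc |orbitDiff S f x k| ≤ ‖f‖ * (‖(S - 1) ^ k‖ * ‖x‖) :=
        (Complex.abs_re_le_norm _).trans (f.le_opNorm_of_le (((S - 1) ^ k).le_opNorm x))
    _ ≤ ‖f‖ * (C * ρ ^ k * ‖x‖) := by gcongr; exact hC k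
    _ = ‖f‖ * ‖x‖ * C * ρ ^ k := by ring

end Orbit

section ZeroCounting

variable {g : ℂ → ℂ} {R ρ M : ℝ}

theorem Differentiable.dslope {w : ℂ} (hg : Differentiable ℂ g) :
    Differentiable ℂ (dslope g w) :=
  differentiableOn_univ.1 <|
    (Complex.differentiableOn_dslope univ_mem).2 hg.differentiableOn

theorem eq_sub_mul_dslope {w : ℂ} (hgw : g w = 0) (z : ℂ) : g z = (z - w) * dslope g w z := by
  rw [← smul_eq_mul, sub_smul_dslope, hgw, sub_zero]

theorem norm_dslope_le_of_eq_zero (hg : Differentiable ℂ g) {w : ℂ} (hgw : g w = 0)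
    (hw : ‖w‖ ≤ R) (hRρ : R < ρ) (hM : ∀ z, ‖z‖ ≤ ρ → ‖g z‖ ≤ M) {z : ℂ} (hz : ‖z‖ ≤ ρ) :
    ‖dslope g w z‖ ≤ M / (ρ - R) := by
  have hρ : 0 < ρ := (norm_nonneg w).trans_lt (hw.trans_lt hRρ)
  have hfrontier : ∀ z ∈ frontier (Metric.ball (0 : ℂ) ρ), ‖dslope g w z‖ ≤ M / (ρ - R) := by
    intro z hz
    rw [frontier_ball 0 hρ.ne', mem_sphere_zero_iff_norm] at hz
    have hdist : ρ - R ≤ ‖z - w‖ := by linarith [norm_sub_norm_le z w]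
    rw [le_div_iff₀ (sub_pos.2 hRρ)]
    calc ‖dslope g w z‖ * (ρ - R) ≤ ‖dslope g w z‖ * ‖z - w‖ := by gcongr
      _ = ‖g z‖ := by rw [eq_sub_mul_dslope hgw z, norm_mul, mul_comm]
      _ ≤ M := hM z hz.le
  refine Complex.norm_le_of_forall_mem_frontier_norm_le Metric.isBounded_ball
    hg.dslope.diffContOnCl hfrontier ?_
  rwa [closure_ball 0 hρ.ne', mem_closedBall_zero_iff]

/- A Jensen-type count: dividing out a zero `w` with `‖w‖ ≤ R` costs a factor `R` at the origin
and gains `ρ - R` on the sphere of radius `ρ`. -/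
theorem norm_mul_pow_card_le_of_eq_zero (hg : Differentiable ℂ g) (hR : 0 < R) (hRρ : R < ρ)
    (s : Finset ℂ) (hs : ∀ w ∈ s, g w = 0 ∧ ‖w‖ ≤ R) (hM : ∀ z, ‖z‖ ≤ ρ → ‖g z‖ ≤ M) :
    ‖g 0‖ * ((ρ - R) / R) ^ s.card ≤ M := by
  induction s using Finset.induction_on generalizing g M with
  | empty => simpa using hM 0 (by simpa using (hR.trans hRρ).le)
  | insert w s hws ih =>
    obtain ⟨hgw, hw⟩ := hs w (mem_insert_self w s)
    have hzeros : ∀ v ∈ s, dslope g w v = 0 ∧ ‖v‖ ≤ R := by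
      intro v hv
      obtain ⟨hgv, hvR⟩ := hs v (mem_insert_of_mem hv)
      have hvw : v - w ≠ 0 := sub_ne_zero.2 (ne_of_mem_of_not_mem hv hws)
      rw [eq_sub_mul_dslope hgw v] at hgv
      exact ⟨(mul_eq_zero.1 hgv).resolve_left hvw, hvR⟩
    have hIH := ih hg.dslope hzeros (fun z hz => norm_dslope_le_of_eq_zero hg hgw hw hRρ hM hz)
    have hg0 : ‖g 0‖ ≤ R * ‖dslope g w 0‖ := by
      rw [eq_sub_mul_dslope hgw 0, norm_mul, zero_sub, norm_neg]
      gcongr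
    rw [le_div_iff₀ (sub_pos.2 hRρ)] at hIH
    rw [card_insert_of_notMem hws, pow_succ]
    calc ‖g 0‖ * (((ρ - R) / R) ^ s.card * ((ρ - R) / R))
        ≤ R * ‖dslope g w 0‖ * (((ρ - R) / R) ^ s.card * ((ρ - R) / R)) := by
          gcongr
      _ = ‖dslope g w 0‖ * ((ρ - R) / R) ^ s.card * (ρ - R) := by field_simp
      _ ≤ M := hIH

end ZeroCounting

section SignChanges

variable {g : ℂ → ℂ}

theorem exists_mem_Ioo_eq_zero_of_re_pos_of_re_neg (hg : Continuous g)
    (hreal : ∀ t : ℝ, (g t).im = 0) {a b : ℝ} (hab : a ≤ b) (ha : 0 < (g a).re)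
    (hb : (g b).re < 0) : ∃ t ∈ Set.Ioo a b, g t = 0 := by
  obtain ⟨t, ht, hgt⟩ := intermediate_value_Ioo' hab
    (Complex.continuous_re.comp (hg.comp Complex.continuous_ofReal)).continuousOn
    (show (0 : ℝ) ∈ Set.Ioo (g b).re (g a).re from ⟨hb, ha⟩)
  exact ⟨t, ht, Complex.ext hgt (hreal t)⟩

theorem exists_finset_eq_zero_of_sign_changes (hg : Continuous g)
    (hreal : ∀ t : ℝ, (g t).im = 0) (N : Finset ℕ)
    (hN : ∀ n ∈ N, 0 < (g n).re ∧ (g (n + 1 : ℕ)).re < 0) :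
    ∃ s : Finset ℂ, s.card = N.card ∧ ∀ w ∈ s, g w = 0 ∧ ∃ n ∈ N, ‖w‖ < n + 1 := by
  have hzero : ∀ n ∈ N, ∃ t ∈ Set.Ioo (n : ℝ) (n + 1), g t = 0 := fun n hn =>
    exists_mem_Ioo_eq_zero_of_re_pos_of_re_neg hg hreal (by linarith)
      (by exact_mod_cast (hN n hn).1) (by exact_mod_cast (hN n hn).2)
  choose! t ht hgt using hzero
  refine ⟨N.image fun n => (t n : ℂ), card_image_of_injOn fun a ha b hb hab => ?_, ?_⟩
  · have htab : t a = t b := Complex.ofReal_injective hab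
    have h1 : (a : ℝ) < b + 1 := (ht a ha).1.trans (htab ▸ (ht b hb).2)
    have h2 : (b : ℝ) < a + 1 := (ht b hb).1.trans (htab ▸ (ht a ha).2)
    norm_cast at h1 h2
    omega
  · simp only [mem_image, forall_exists_index, and_imp]
    rintro _ n hn rfl
    refine ⟨hgt n hn, n, hn, ?_⟩
    rw [Complex.norm_real, Real.norm_eq_abs, abs_of_pos ((Nat.cast_nonneg n).trans_lt (ht n hn).1)]
    exact (ht n hn).2

variable {B τ : ℝ}

theorem norm_mul_three_pow_card_le_of_norm_le_exp (hg : Differentiable ℂ g) (hτ : 0 ≤ τ)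
    (hB : ∀ z, ‖g z‖ ≤ B * Real.exp (τ * ‖z‖)) {R : ℝ} (hR : 0 < R) (s : Finset ℂ)
    (hs : ∀ w ∈ s, g w = 0 ∧ ‖w‖ ≤ R) : ‖g 0‖ * 3 ^ s.card ≤ B * Real.exp (4 * τ * R) := by
  have hB0 : 0 ≤ B := by simpa using (norm_nonneg _).trans (hB 0)
  have hM : ∀ z, ‖z‖ ≤ 4 * R → ‖g z‖ ≤ B * Real.exp (4 * τ * R) := fun z hz =>
    (hB z).trans (mul_le_mul_of_nonneg_left (Real.exp_le_exp.2 (by nlinarith)) hB0)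
  have h := norm_mul_pow_card_le_of_eq_zero hg hR (by linarith : R < 4 * R) s hs hM
  rwa [show (4 * R - R) / R = 3 by field_simp; ring] at h

theorem norm_mul_exp_le_of_card_sign_changes (hg : Differentiable ℂ g)
    (hreal : ∀ t : ℝ, (g t).im = 0) (hτ : 0 ≤ τ) (hB : ∀ z, ‖g z‖ ≤ B * Real.exp (τ * ‖z‖))
    {δ : ℝ} {k : ℕ}
    (hk : δ * (k + 1) ≤ #{n ∈ range (k + 1) | 0 < (g (n : ℕ)).re ∧ (g (n + 1 : ℕ)).re < 0}) :
    ‖g 0‖ * Real.exp (δ * Real.log 3 * (k + 1)) ≤ B * Real.exp (4 * τ * (k + 1)) := by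
  obtain ⟨s, hcard, hs⟩ := exists_finset_eq_zero_of_sign_changes hg.continuous hreal
    {n ∈ range (k + 1) | 0 < (g (n : ℕ)).re ∧ (g (n + 1 : ℕ)).re < 0}
    fun n hn => (mem_filter.1 hn).2
  have hzeros : ∀ w ∈ s, g w = 0 ∧ ‖w‖ ≤ k + 1 := by
    intro w hw
    obtain ⟨hgw, n, hn, hwn⟩ := hs w hw
    have hnk : (n : ℝ) ≤ k := by
      exact_mod_cast Nat.lt_succ_iff.1 (mem_range.1 (mem_filter.1 hn).1)
    exact ⟨hgw, by linarith⟩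
  have hpow : Real.exp (δ * Real.log 3 * (k + 1)) ≤ 3 ^ s.card :=
    calc Real.exp (δ * Real.log 3 * (k + 1)) ≤ Real.exp (s.card * Real.log 3) := by
          rw [Real.exp_le_exp, mul_right_comm, hcard]
          exact mul_le_mul_of_nonneg_right hk (Real.log_nonneg (by norm_num))
      _ = 3 ^ s.card := by rw [Real.exp_nat_mul, Real.exp_log (by norm_num)]
  calc ‖g 0‖ * Real.exp (δ * Real.log 3 * (k + 1)) ≤ ‖g 0‖ * 3 ^ s.card := by gcongr
    _ ≤ B * Real.exp (4 * τ * (k + 1)) :=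
        norm_mul_three_pow_card_le_of_norm_le_exp hg hτ hB (by positivity) s hzeros

theorem mul_log_three_le_of_frequently_sign_changes (hg : Differentiable ℂ g)
    (hreal : ∀ t : ℝ, (g t).im = 0) (h0 : g 0 ≠ 0) (hτ : 0 ≤ τ)
    (hB : ∀ z, ‖g z‖ ≤ B * Real.exp (τ * ‖z‖)) {δ : ℝ}
    (hδ : ∃ᶠ k : ℕ in atTop,
      δ * (k + 1) ≤ #{n ∈ range (k + 1) | 0 < (g (n : ℕ)).re ∧ (g (n + 1 : ℕ)).re < 0}) :
    δ * Real.log 3 ≤ 4 * τ := by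
  by_contra! hlt
  have hbounded : ∃ᶠ k : ℕ in atTop,
      ‖g 0‖ * Real.exp ((δ * Real.log 3 - 4 * τ) * (k + 1)) ≤ B := by
    refine hδ.mono fun k hk => ?_
    rw [sub_mul, Real.exp_sub, ← mul_div_assoc, div_le_iff₀ (Real.exp_pos _)]
    exact norm_mul_exp_le_of_card_sign_changes hg hreal hτ hB hk
  have hunbounded : Tendsto (fun k : ℕ => ‖g 0‖ * Real.exp ((δ * Real.log 3 - 4 * τ) * (k + 1)))
      atTop atTop :=
    (Real.tendsto_exp_atTop.comp <|
      (tendsto_natCast_atTop_atTop.atTop_add tendsto_const_nhds).const_mul_atTop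
        (sub_pos.2 hlt)).const_mul_atTop (norm_pos_iff.2 h0)
  obtain ⟨k, hk, hk'⟩ := (hbounded.and_eventually (hunbounded.eventually_gt_atTop B)).exists
  exact lt_irrefl B (hk'.trans_le hk)

end SignChanges

theorem not_quasinilpotent_of_positive_lower_density_return_times_general
    {X : Type*} [NormedAddCommGroup X] [NormedSpace ℂ X] [CompleteSpace X]
    (S : X →L[ℂ] X) (f : X →L[ℂ] ℂ)
    (U : Set X) (hU : U = {y : X | 0 < (f y).re ∧ (f (S y)).re < 0})
    (x : X) (hx : x ∈ U)
    (hdens : 0 < Filter.liminf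
      (fun k : ℕ => (({n : ℕ | n ≤ k ∧ (S ^ n) x ∈ U}.ncard : ℝ)) / (k + 1))
      Filter.atTop) :
    spectralRadius ℂ (S - 1) ≠ 0 := by
  intro hrad
  subst hU
  obtain ⟨δ, hδ, hreturns⟩ := exists_pos_eventually_lt_of_pos_liminf (fun k => by positivity) hdens
  obtain ⟨τ, hτ, hτδ⟩ : ∃ τ > 0, 4 * τ < δ * Real.log 3 :=
    ⟨δ * Real.log 3 / 8, by positivity, by nlinarith [Real.log_pos (by norm_num : (1 : ℝ) < 3)]⟩
  obtain ⟨ρ, hρ, hq⟩ : ∃ ρ > 0, ρ * Real.exp τ / τ < 1 :=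
    ⟨τ / (2 * Real.exp τ), by positivity, by field_simp; linarith⟩
  obtain ⟨A, hA⟩ := exists_abs_orbitDiff_le_of_spectralRadius_eq_zero S f x hrad hρ
  have hsign : ∃ᶠ k : ℕ in atTop, δ * (k + 1) ≤ #{n ∈ range (k + 1) |
      0 < (newtonSeries (orbitDiff S f x) (n : ℕ)).re ∧
        (newtonSeries (orbitDiff S f x) (n + 1 : ℕ)).re < 0} := by
    refine hreturns.frequently.mono fun k hk => ?_
    rw [lt_div_iff₀ (by positivity)] at hk
    exact hk.le.trans (Nat.cast_le.2 (ncard_le_card_filter_range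
      (fun n hn => re_newtonSeries_orbitDiff_pos_and_neg S f x hn.1 hn.2) k))
  have hG0 : newtonSeries (orbitDiff S f x) 0 ≠ 0 := by
    rw [newtonSeries_orbitDiff_zero, Complex.ofReal_ne_zero]
    exact hx.1.ne'
  have htype := mul_log_three_le_of_frequently_sign_changes
    (differentiable_newtonSeries hρ.le hτ hq hA) (im_newtonSeries_ofReal _) hG0 hτ.le
    (norm_newtonSeries_le hρ.le hτ hq hA) hsign
  linarith

/-- Let `X` be a complex Banach space, `S` a bounded operator on `X`,
`x* ∈ X*` a nonzero functional and `U = {y : Re x*(y) > 0 and Re x*(S y) < 0}`. If there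
is `x ∈ U` such that `liminf_k #(N_S(x,U) ∩ [0,k])/(k+1) > 0`, then `S − I` is not
quasinilpotent, i.e. its spectral radius is nonzero. -/
theorem not_quasinilpotent_of_positive_lower_density_return_times
    {X : Type*} [NormedAddCommGroup X] [NormedSpace ℂ X] [CompleteSpace X]
    (S : X →L[ℂ] X) (f : X →L[ℂ] ℂ) (hf : f ≠ 0)
    (U : Set X) (hU : U = {y : X | 0 < (f y).re ∧ (f (S y)).re < 0})
    (x : X) (hx : x ∈ U)
    (hdens : 0 < Filter.liminf
      (fun k : ℕ => (({n : ℕ | n ≤ k ∧ (S ^ n) x ∈ U}.ncard : ℝ)) / (k + 1))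
      Filter.atTop) :
    spectralRadius ℂ (S - 1) ≠ 0 :=
  not_quasinilpotent_of_positive_lower_density_return_times_general S f U hU x hx hdens
end
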